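/- arXiv:cs/0504003 — 13 statements merged into one kernel-verified Lean document; each statement's English description precedes it below -/
import Mathlib

section
/- Let M ≥ 2 and let (X_1, …, X_M) be a zero-mean square-integrable real random vector whose M×M covariance matrix K = (E[X_i X_j]) is positive definite. For i = 2, …, M let K_{i−1} denote the 1×(i−1) row vector K_{i−1} = Cov(X_i, (X_1,…,X_{i−1})) · Cov((X_1,…,X_{i−1}))^{−1}, and let B_i = X_i − K_{i−1}(X_1,…,X_{i−1})^T be the linear MMSE innovation. Let N_2, …, N_M be zero-mean square-integrable real random variables with E[N_i²] = E[B_i²] for each i, such that X_1, N_2, …, N_M are mutually independent. Define recursively X̃_1 = X_1 and X̃_i = K_{i−1}(X̃_1,…,X̃_{i−1})^T + N_i for i = 2, …, M. Then (X̃_1, …, X̃_M) is zero-mean and its covariance matrix equals K, i.e. E[X̃_i X̃_j] = E[X_i X_j] for all i, j. -/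
open MeasureTheory ProbabilityTheory

/-!
Let `L` be the unit lower triangular matrix with `L i j = -c i j` for `j < i`, so that the
innovations are `B = L X` and the recursion says `L X̃ = Z` for `Z = (X 0, N 1, …, N (M-1))`.
The normal equations make `L K` upper triangular, so `L K Lᵀ`, being also symmetric, is diagonal:
the innovations are uncorrelated. The independent noises are uncorrelated as well and have the same
variances, hence `L Cov(X̃) Lᵀ = Cov(Z) = Cov(B) = L K Lᵀ`, and `Cov(X̃) = K` because `det L = 1`.
The means vanish because `X̃ = L⁻¹ Z`.
-/

open Finset Matrix

lemma Matrix.IsUpperTriangular.isDiag_of_isSymm {ι R : Type*} [LinearOrder ι] [Zero R]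
    {A : Matrix ι ι R} (hA : A.IsUpperTriangular) (hsymm : A.IsSymm) : A.IsDiag := by
  intro i j hij
  rcases hij.lt_or_gt with h | h
  · rw [← hsymm.apply i j]
    exact hA h
  · exact hA h

lemma Matrix.IsDiag.eq_of_diag_eq {ι R : Type*} [DecidableEq ι] [Zero R] {A B : Matrix ι ι R}
    (hA : A.IsDiag) (hB : B.IsDiag) (h : A.diag = B.diag) : A = B := by
  rw [← hA.diagonal_diag, ← hB.diagonal_diag, h]

lemma Matrix.eq_of_mul_mul_transpose_eq {ι R : Type*} [Fintype ι] [DecidableEq ι] [CommRing R]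
    {A G K : Matrix ι ι R} (hA : IsUnit A.det) (h : A * G * Aᵀ = A * K * Aᵀ) : G = K := by
  have hAt : IsUnit Aᵀ := (isUnit_iff_isUnit_det _).2 (by rwa [det_transpose])
  exact ((isUnit_iff_isUnit_det A).2 hA).mul_left_cancel (hAt.mul_right_cancel h)

section Innovation

variable {ι R : Type*} [LinearOrder ι] [CommRing R]

def innovationMatrix (c : ι → ι → R) : Matrix ι ι R :=
  1 - Matrix.of fun i j => if j < i then c i j else 0

lemma innovationMatrix_mulVec_apply [Fintype ι] [LocallyFiniteOrderBot ι] (c : ι → ι → R)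
    (x : ι → R) (i : ι) : (innovationMatrix c *ᵥ x) i = x i - ∑ j ∈ Iio i, c i j * x j := by
  rw [innovationMatrix, sub_mulVec, one_mulVec, Pi.sub_apply]
  simp only [mulVec, dotProduct, of_apply, ite_mul, zero_mul, ← sum_filter, filter_gt_eq_Iio]

lemma innovationMatrix_mulVec_eq_iff [Fintype ι] [LocallyFiniteOrderBot ι] (c : ι → ι → R)
    (x z : ι → R) :
    innovationMatrix c *ᵥ x = z ↔ ∀ i, x i = ∑ j ∈ Iio i, c i j * x j + z i := by
  simp only [funext_iff, innovationMatrix_mulVec_apply, sub_eq_iff_eq_add']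

lemma innovationMatrix_isLowerTriangular (c : ι → ι → R) :
    (innovationMatrix c).IsLowerTriangular := by
  intro i j (hij : i < j)
  simp [innovationMatrix, hij.ne, hij.not_gt]

lemma isUnit_det_innovationMatrix [Fintype ι] (c : ι → ι → R) :
    IsUnit (innovationMatrix c).det := by
  rw [det_of_isLowerTriangular _ (innovationMatrix_isLowerTriangular c),
    prod_eq_one fun i _ => by simp [innovationMatrix]]
  exact isUnit_one

lemma eq_inv_innovationMatrix_mulVec [Fintype ι] [LocallyFiniteOrderBot ι] {c : ι → ι → R}
    {x z : ι → R} (h : ∀ i, x i = ∑ j ∈ Iio i, c i j * x j + z i) :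
    x = (innovationMatrix c)⁻¹ *ᵥ z := by
  rw [← (innovationMatrix_mulVec_eq_iff c x z).2 h, mulVec_mulVec,
    nonsing_inv_mul _ (isUnit_det_innovationMatrix c), one_mulVec]

lemma innovationMatrix_mul_mul_transpose_isDiag [Fintype ι] [LocallyFiniteOrderBot ι]
    {c : ι → ι → R} {K : Matrix ι ι R} (hK : K.IsSymm)
    (hc : ∀ i k, k < i → ∑ j ∈ Iio i, c i j * K j k = K i k) :
    (innovationMatrix c * K * (innovationMatrix c)ᵀ).IsDiag := by
  have hLK : (innovationMatrix c * K).IsUpperTriangular := fun i k (hki : k < i) => by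
    change (innovationMatrix c *ᵥ fun j => K j k) i = 0
    rw [innovationMatrix_mulVec_apply, hc i k hki, sub_self]
  refine IsUpperTriangular.isDiag_of_isSymm ?_ ?_
  · exact hLK.mul fun i j hij => innovationMatrix_isLowerTriangular c hij
  · simp only [IsSymm, transpose_mul, transpose_transpose, hK.eq, Matrix.mul_assoc]

end Innovation

section SecondMoments

variable {Ω ι κ : Type*} [MeasurableSpace Ω] {μ : Measure Ω} {Y : ι → Ω → ℝ}

noncomputable def secondMomentMatrix (μ : Measure Ω) (Y : ι → Ω → ℝ) : Matrix ι ι ℝ :=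
  Matrix.of fun i j => ∫ ω, Y i ω * Y j ω ∂μ

lemma secondMomentMatrix_isSymm (μ : Measure Ω) (Y : ι → Ω → ℝ) :
    (secondMomentMatrix μ Y).IsSymm := by
  ext i j
  simp only [secondMomentMatrix, transpose_apply, of_apply, mul_comm]

lemma secondMomentMatrix_isDiag_of_indepFun (hY : ∀ i, AEStronglyMeasurable (Y i) μ)
    (hmean : ∀ i, ∫ ω, Y i ω ∂μ = 0) (hindep : Pairwise fun i j => IndepFun (Y i) (Y j) μ) :
    (secondMomentMatrix μ Y).IsDiag := by
  intro i j hij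
  simp only [secondMomentMatrix, of_apply,
    (hindep hij).integral_fun_mul_eq_mul_integral (hY i) (hY j), hmean, mul_zero]

lemma memLp_mulVec_apply [Fintype ι] (A : Matrix κ ι ℝ) (hY : ∀ i, MemLp (Y i) 2 μ) (k : κ) :
    MemLp (fun ω => (A *ᵥ fun i => Y i ω) k) 2 μ :=
  memLp_finsetSum _ fun i _ => (hY i).const_mul (A k i)

lemma integral_mulVec_apply [Fintype ι] (A : Matrix κ ι ℝ) (hY : ∀ i, Integrable (Y i) μ)
    (k : κ) : ∫ ω, (A *ᵥ fun i => Y i ω) k ∂μ = (A *ᵥ fun i => ∫ ω, Y i ω ∂μ) k := by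
  simp only [mulVec, dotProduct]
  rw [integral_finsetSum _ fun i _ => (hY i).const_mul (A k i)]
  simp_rw [integral_const_mul]

lemma secondMomentMatrix_mulVec [Fintype ι] (A : Matrix κ ι ℝ) (hY : ∀ i, MemLp (Y i) 2 μ) :
    secondMomentMatrix μ (fun k ω => (A *ᵥ fun i => Y i ω) k)
      = A * secondMomentMatrix μ Y * Aᵀ := by
  ext k l
  have hint (i j : ι) : Integrable (fun ω => A k i * A l j * (Y i ω * Y j ω)) μ :=
    ((hY i).integrable_mul (hY j)).const_mul _
  calc ∫ ω, (A *ᵥ fun i => Y i ω) k * (A *ᵥ fun i => Y i ω) l ∂μ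
      = ∫ ω, ∑ i, ∑ j, A k i * A l j * (Y i ω * Y j ω) ∂μ := by
        congr 1; ext ω
        simp only [mulVec, dotProduct, sum_mul_sum]
        exact sum_congr rfl fun i _ => sum_congr rfl fun j _ => by ring
    _ = ∑ i, ∑ j, A k i * A l j * ∫ ω, Y i ω * Y j ω ∂μ := by
        rw [integral_finsetSum _ fun i _ => integrable_finsetSum _ fun j _ => hint i j]
        simp_rw [integral_finsetSum _ fun j _ => hint _ j, integral_const_mul]
    _ = (A * secondMomentMatrix μ Y * Aᵀ) k l := by
        simp only [mul_apply, secondMomentMatrix, of_apply, transpose_apply, sum_mul]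
        rw [sum_comm]
        exact sum_congr rfl fun i _ => sum_congr rfl fun j _ => by ring

variable [Fintype ι] [LinearOrder ι] [LocallyFiniteOrderBot ι]
  {c : ι → ι → ℝ} {X B Z Xt : ι → Ω → ℝ}

lemma integral_eq_zero_of_sequential (hZ : ∀ i, Integrable (Z i) μ)
    (hZmean : ∀ i, ∫ ω, Z i ω ∂μ = 0)
    (hXt : ∀ i ω, Xt i ω = ∑ j ∈ Iio i, c i j * Xt j ω + Z i ω) (i : ι) :
    ∫ ω, Xt i ω ∂μ = 0 := by
  rw [funext fun ω => congrFun (eq_inv_innovationMatrix_mulVec (hXt · ω)) i,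
    integral_mulVec_apply _ hZ]
  simp only [hZmean]
  exact congrFun (mulVec_zero _) i

theorem secondMomentMatrix_eq_of_sequential (hX : ∀ i, MemLp (X i) 2 μ)
    (hZ : ∀ i, MemLp (Z i) 2 μ)
    (hc : ∀ i k, k < i →
      ∑ j ∈ Iio i, c i j * secondMomentMatrix μ X j k = secondMomentMatrix μ X i k)
    (hB : ∀ i ω, B i ω = X i ω - ∑ j ∈ Iio i, c i j * X j ω)
    (hZdiag : (secondMomentMatrix μ Z).IsDiag)
    (hZB : ∀ i, ∫ ω, Z i ω * Z i ω ∂μ = ∫ ω, B i ω * B i ω ∂μ)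
    (hXt : ∀ i ω, Xt i ω = ∑ j ∈ Iio i, c i j * Xt j ω + Z i ω) :
    secondMomentMatrix μ Xt = secondMomentMatrix μ X := by
  set L := innovationMatrix c
  have hXt2 (i : ι) : MemLp (Xt i) 2 μ := by
    rw [funext fun ω => congrFun (eq_inv_innovationMatrix_mulVec (hXt · ω)) i]
    exact memLp_mulVec_apply _ hZ i
  have hLXt : (fun i ω => (L *ᵥ fun j => Xt j ω) i) = Z := by
    ext i ω
    rw [(innovationMatrix_mulVec_eq_iff c _ _).2 fun i => hXt i ω]
  have hLX : (fun i ω => (L *ᵥ fun j => X j ω) i) = B := by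
    ext i ω
    rw [innovationMatrix_mulVec_apply, hB]
  have hBdiag : (secondMomentMatrix μ B).IsDiag := by
    rw [← hLX, secondMomentMatrix_mulVec L hX]
    exact innovationMatrix_mul_mul_transpose_isDiag (secondMomentMatrix_isSymm μ X) hc
  refine eq_of_mul_mul_transpose_eq (isUnit_det_innovationMatrix c) ?_
  rw [← secondMomentMatrix_mulVec L hXt2, hLXt, hZdiag.eq_of_diag_eq hBdiag (funext hZB), ← hLX,
    secondMomentMatrix_mulVec L hX]

end SecondMoments

theorem sequential_quantization_reproduces_covariance_general
    {Ω : Type*} [MeasurableSpace Ω] (μ : Measure Ω) [IsProbabilityMeasure μ]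
    (M : ℕ) [NeZero M]
    (X : Fin M → Ω → ℝ)
    (hX2 : ∀ i, MemLp (X i) 2 μ)
    (hXmean : ∀ i, ∫ ω, X i ω ∂μ = 0)
    (K : Matrix (Fin M) (Fin M) ℝ)
    (hK : ∀ i j, K i j = ∫ ω, X i ω * X j ω ∂μ)
    -- `c i` is the row vector of linear MMSE coefficients of `X i` given `X 0, …, X (i-1)`,
    -- characterized by the normal equations (the leading principal minors of `K` are
    -- invertible since `K` is positive definite, so these determine `c i` uniquely).
    (c : Fin M → Fin M → ℝ)
    (hc : ∀ i k : Fin M, k < i →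
      ∑ j ∈ Finset.Iio i, c i j * K j k = K i k)
    -- the linear MMSE innovations
    (B : Fin M → Ω → ℝ)
    (hB : ∀ i : Fin M, B i = fun ω => X i ω - ∑ j ∈ Finset.Iio i, c i j * X j ω)
    -- the independent noises
    (N : Fin M → Ω → ℝ)
    (hN2 : ∀ i, MemLp (N i) 2 μ)
    (hNmean : ∀ i, ∫ ω, N i ω ∂μ = 0)
    (hNvar : ∀ i : Fin M, 0 < i → ∫ ω, (N i ω) ^ 2 ∂μ = ∫ ω, (B i ω) ^ 2 ∂μ)
    -- `X 0, N 1, …, N (M-1)` are mutually independent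
    (hIndep : iIndepFun
      (fun i : Fin M => if i = 0 then X 0 else N i) μ)
    -- the sequentially generated process
    (Xt : Fin M → Ω → ℝ)
    (hXt0 : Xt 0 = X 0)
    (hXtrec : ∀ i : Fin M, 0 < i →
      Xt i = fun ω => (∑ j ∈ Finset.Iio i, c i j * Xt j ω) + N i ω) :
    (∀ i, ∫ ω, Xt i ω ∂μ = 0) ∧
    (∀ i j, ∫ ω, Xt i ω * Xt j ω ∂μ = K i j) := by
  set Z : Fin M → Ω → ℝ := fun i => if i = 0 then X 0 else N i
  have hKX : K = secondMomentMatrix μ X := Matrix.ext hK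
  have hIio : Iio (0 : Fin M) = ∅ := Iio_eq_empty.2 fun j _ => Fin.zero_le j
  have hZ2 (i : Fin M) : MemLp (Z i) 2 μ := by by_cases h : i = 0 <;> simp [Z, h, hX2, hN2]
  have hZmean (i : Fin M) : ∫ ω, Z i ω ∂μ = 0 := by
    by_cases h : i = 0 <;> simp [Z, h, hXmean, hNmean]
  have hZB (i : Fin M) : ∫ ω, Z i ω * Z i ω ∂μ = ∫ ω, B i ω * B i ω ∂μ := by
    by_cases h : i = 0
    · simp [Z, h, hB 0, hIio]
    · simp [Z, h, ← sq, hNvar i (Fin.pos_iff_ne_zero.2 h)]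
  have hrec (i : Fin M) (ω : Ω) : Xt i ω = ∑ j ∈ Iio i, c i j * Xt j ω + Z i ω := by
    by_cases h : i = 0
    · simp [Z, h, hXt0, hIio]
    · simp [Z, h, hXtrec i (Fin.pos_iff_ne_zero.2 h)]
  refine ⟨integral_eq_zero_of_sequential (fun i => (hZ2 i).integrable one_le_two) hZmean hrec,
    fun i j => ?_⟩
  have hZdiag := secondMomentMatrix_isDiag_of_indepFun (fun i => (hZ2 i).1) hZmean
    fun i j hij => hIndep.indepFun hij
  rw [hKX, ← secondMomentMatrix_eq_of_sequential hX2 hZ2 (hKX ▸ hc) (fun i ω => by rw [hB])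
    hZdiag hZB hrec]
  rfl

/-- Gram–Schmidt orthogonalization vs. sequential (dithered) quantization, scalar case:
a sequential additive-independent-noise system driven by `X 0`, with noise variances
matching the linear MMSE innovation variances, reproduces the prescribed covariance
matrix `K`. -/
theorem sequential_quantization_reproduces_covariance
    {Ω : Type*} [MeasurableSpace Ω] (μ : Measure Ω) [IsProbabilityMeasure μ]
    (M : ℕ) (hM : 2 ≤ M) [NeZero M]
    (X : Fin M → Ω → ℝ)
    (hX2 : ∀ i, MemLp (X i) 2 μ)
    (hXmean : ∀ i, ∫ ω, X i ω ∂μ = 0)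
    (K : Matrix (Fin M) (Fin M) ℝ)
    (hK : ∀ i j, K i j = ∫ ω, X i ω * X j ω ∂μ)
    (hKpd : K.PosDef)
    -- `c i` is the row vector of linear MMSE coefficients of `X i` given `X 0, …, X (i-1)`,
    -- characterized by the normal equations (the leading principal minors of `K` are
    -- invertible since `K` is positive definite, so these determine `c i` uniquely).
    (c : Fin M → Fin M → ℝ)
    (hc : ∀ i k : Fin M, k < i →
      ∑ j ∈ Finset.Iio i, c i j * K j k = K i k)
    -- the linear MMSE innovations
    (B : Fin M → Ω → ℝ)
    (hB : ∀ i : Fin M, B i = fun ω => X i ω - ∑ j ∈ Finset.Iio i, c i j * X j ω)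
    -- the independent noises
    (N : Fin M → Ω → ℝ)
    (hN2 : ∀ i, MemLp (N i) 2 μ)
    (hNmean : ∀ i, ∫ ω, N i ω ∂μ = 0)
    (hNvar : ∀ i : Fin M, 0 < i → ∫ ω, (N i ω) ^ 2 ∂μ = ∫ ω, (B i ω) ^ 2 ∂μ)
    -- `X 0, N 1, …, N (M-1)` are mutually independent
    (hIndep : iIndepFun
      (fun i : Fin M => if i = 0 then X 0 else N i) μ)
    -- the sequentially generated process
    (Xt : Fin M → Ω → ℝ)
    (hXt0 : Xt 0 = X 0)
    (hXtrec : ∀ i : Fin M, 0 < i →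
      Xt i = fun ω => (∑ j ∈ Finset.Iio i, c i j * Xt j ω) + N i ω) :
    (∀ i, ∫ ω, Xt i ω ∂μ = 0) ∧
    (∀ i j, ∫ ω, Xt i ω * Xt j ω ∂μ = K i j) :=
  sequential_quantization_reproduces_covariance_general μ M X hX2 hXmean K hK c hc B hB N hN2 hNmean
    hNvar hIndep Xt hXt0 hXtrec
end

section
/- The second-moment matrix of (X, W_1, W_2) equals the second-moment matrix of (X, U_1, U_2). Explicitly: E[W_1] = E[W_2] = 0, E[X·W_1] = E[X·W_2] = σ², E[W_1²] = σ² + s0 + s1, E[W_2²] = σ² + s0 + s2, and E[W_1·W_2] = σ² + s0 − σT1·σT2. -/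
open MeasureTheory ProbabilityTheory

/-!
`X`, `N1`, `N2` are centred and independent, hence orthogonal in `L²(μ)`. Since `a1 + a2 = 1`,
`W2 = X + a2 N1 + N2`, so `X`, `W1`, `W2` are linear combinations of this orthogonal family and
each of their second moments is the matching weighted sum of the three variances. What remains
is `a2 (s0 + s1) = s0 - σT1 σT2` and `a2² (s0 + s1) + E[N2²] = s0 + s2`, the latter because
`(σT1 σT2)² = s1 s2` once `s1, s2 ≥ 0`.
-/

section Orthogonal

variable {Ω ι : Type*} [MeasurableSpace Ω] {μ : Measure Ω} [Fintype ι]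

lemma integral_sum_mul_sum_of_pairwise_integral_mul_eq_zero {Y : ι → Ω → ℝ}
    (hY : ∀ i, MemLp (Y i) 2 μ) (horth : Pairwise fun i j => ∫ ω, Y i ω * Y j ω ∂μ = 0)
    (a b : ι → ℝ) :
    ∫ ω, (∑ i, a i * Y i ω) * (∑ j, b j * Y j ω) ∂μ = ∑ i, a i * b i * ∫ ω, Y i ω ^ 2 ∂μ := by
  have hprod : ∀ i j, Integrable (fun ω => Y i ω * Y j ω) μ :=
    fun i j => (hY i).integrable_mul (hY j)
  have hexpand : ∀ ω, (∑ i, a i * Y i ω) * (∑ j, b j * Y j ω)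
      = ∑ i, ∑ j, a i * b j * (Y i ω * Y j ω) := fun ω => by
    simp_rw [Finset.sum_mul_sum, mul_mul_mul_comm]
  simp_rw [hexpand]
  rw [integral_finsetSum _ fun i _ => integrable_finsetSum _ fun j _ => (hprod i j).const_mul _]
  refine Finset.sum_congr rfl fun i _ => ?_
  rw [integral_finsetSum _ fun j _ => (hprod i j).const_mul _,
    Finset.sum_eq_single i (fun j _ hji => by rw [integral_const_mul, horth hji.symm, mul_zero])
      (by simp),
    integral_const_mul]
  simp_rw [sq]

lemma integral_sum_of_integral_eq_zero {Y : ι → Ω → ℝ} (hY : ∀ i, Integrable (Y i) μ)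
    (hmean : ∀ i, ∫ ω, Y i ω ∂μ = 0) (a : ι → ℝ) :
    ∫ ω, ∑ i, a i * Y i ω ∂μ = 0 := by
  rw [integral_finsetSum _ fun i _ => (hY i).const_mul _]
  exact Finset.sum_eq_zero fun i _ => by rw [integral_const_mul, hmean i, mul_zero]

end Orthogonal

section Independent

variable {Ω : Type*} [MeasurableSpace Ω] {μ : Measure Ω} {X Y Z : Ω → ℝ}

lemma ProbabilityTheory.IndepFun.integral_mul_eq_zero (hXY : IndepFun X Y μ)
    (hX : AEStronglyMeasurable X μ) (hY : AEStronglyMeasurable Y μ) (hXmean : ∫ ω, X ω ∂μ = 0) :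
    ∫ ω, X ω * Y ω ∂μ = 0 := by
  rw [hXY.integral_fun_mul_eq_mul_integral hX hY, hXmean, zero_mul]

lemma pairwise_integral_mul_eq_zero_of_indepFun (hX : AEStronglyMeasurable X μ)
    (hY : AEStronglyMeasurable Y μ) (hZ : AEStronglyMeasurable Z μ) (hXY : IndepFun X Y μ)
    (hXYZ : IndepFun (fun ω => (X ω, Y ω)) Z μ)
    (hXmean : ∫ ω, X ω ∂μ = 0) (hYmean : ∫ ω, Y ω ∂μ = 0) :
    Pairwise fun i j => ∫ ω, ![X, Y, Z] i ω * ![X, Y, Z] j ω ∂μ = 0 := by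
  have hXY' := hXY.integral_mul_eq_zero hX hY hXmean
  have hXZ := (hXYZ.comp measurable_fst measurable_id).integral_mul_eq_zero hX hZ hXmean
  have hYZ := (hXYZ.comp measurable_snd measurable_id).integral_mul_eq_zero hY hZ hYmean
  intro i j hij
  fin_cases i <;> fin_cases j <;> simp_all [mul_comm]

end Independent

lemma mul_div_sub_le_mul_div_sub {σ D D' : ℝ} (hD : D ≤ D') (hD' : D' < σ) :
    D * σ / (σ - D) ≤ D' * σ / (σ - D') := by
  rw [div_le_div_iff₀ (by linarith) (by linarith)]
  nlinarith [mul_nonneg (sq_nonneg σ) (sub_nonneg.2 hD)]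

theorem successive_quantization_second_moments_general
    {Ω : Type*} [MeasurableSpace Ω] (μ : Measure Ω) [IsProbabilityMeasure μ]
    (σ2 D1 D2 D3 s0 s1 s2 : ℝ)
    (hD3pos : 0 < D3) (hD3leD1 : D3 ≤ D1) (hD1 : D1 < σ2)
    (hD3leD2 : D3 ≤ D2) (hD2 : D2 < σ2)
    (hs0 : s0 = D3 * σ2 / (σ2 - D3))
    (hs1 : s1 = D1 * σ2 / (σ2 - D1) - s0)
    (hs2 : s2 = D2 * σ2 / (σ2 - D2) - s0)
    (a1 a2 : ℝ)
    (ha1 : a1 = (s1 + Real.sqrt s1 * Real.sqrt s2) / (s0 + s1))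
    (ha2 : a2 = (s0 - Real.sqrt s1 * Real.sqrt s2) / (s0 + s1))
    (X N1 N2 : Ω → ℝ)
    (hX2 : MemLp X 2 μ) (hN12 : MemLp N1 2 μ) (hN22 : MemLp N2 2 μ)
    (hXmean : ∫ ω, X ω ∂μ = 0) (hN1mean : ∫ ω, N1 ω ∂μ = 0) (hN2mean : ∫ ω, N2 ω ∂μ = 0)
    (hXvar : ∫ ω, (X ω) ^ 2 ∂μ = σ2)
    (hN1var : ∫ ω, (N1 ω) ^ 2 ∂μ = s0 + s1)
    (hN2var : ∫ ω, (N2 ω) ^ 2 ∂μ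
      = s0 * (Real.sqrt s1 + Real.sqrt s2) ^ 2 / (s0 + s1))
    -- `X, N1, N2` are mutually independent
    (hIndep1 : IndepFun X N1 μ)
    (hIndep2 : IndepFun (fun ω => (X ω, N1 ω)) N2 μ)
    (W1 W2 : Ω → ℝ)
    (hW1 : W1 = fun ω => X ω + N1 ω)
    (hW2 : W2 = fun ω => a1 * X ω + a2 * W1 ω + N2 ω) :
    (∫ ω, W1 ω ∂μ = 0) ∧ (∫ ω, W2 ω ∂μ = 0) ∧
    (∫ ω, X ω * W1 ω ∂μ = σ2) ∧ (∫ ω, X ω * W2 ω ∂μ = σ2) ∧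
    (∫ ω, (W1 ω) ^ 2 ∂μ = σ2 + s0 + s1) ∧
    (∫ ω, (W2 ω) ^ 2 ∂μ = σ2 + s0 + s2) ∧
    (∫ ω, W1 ω * W2 ω ∂μ = σ2 + s0 - Real.sqrt s1 * Real.sqrt s2) := by
  have hs01 : 0 < s0 + s1 := by
    rw [hs1, add_sub_cancel]
    exact div_pos (mul_pos (hD3pos.trans_le hD3leD1) (by linarith)) (by linarith)
  have hs1 : 0 ≤ s1 := by
    rw [hs1, hs0, sub_nonneg]; exact mul_div_sub_le_mul_div_sub hD3leD1 hD1
  have hs2 : 0 ≤ s2 := by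
    rw [hs2, hs0, sub_nonneg]; exact mul_div_sub_le_mul_div_sub hD3leD2 hD2
  have ha12 : a1 + a2 = 1 := by
    rw [ha1, ha2, ← add_div, div_eq_one_iff_eq hs01.ne']; ring
  set Y : Fin 3 → Ω → ℝ := ![X, N1, N2]
  have hY : ∀ i, MemLp (Y i) 2 μ := by
    intro i; fin_cases i <;> assumption
  have hYmean : ∀ i, ∫ ω, Y i ω ∂μ = 0 := by
    intro i; fin_cases i <;> assumption
  have hYorth := pairwise_integral_mul_eq_zero_of_indepFun hX2.1 hN12.1 hN22.1 hIndep1 hIndep2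
    hXmean hN1mean
  have hX : X = fun ω => ∑ i, ![1, 0, 0] i * Y i ω := by ext; simp [Y, Fin.sum_univ_three]
  have hW1' : W1 = fun ω => ∑ i, ![1, 1, 0] i * Y i ω := by
    ext; simp [Y, hW1, Fin.sum_univ_three]
  have hW2' : W2 = fun ω => ∑ i, ![1, a2, 1] i * Y i ω := by
    ext; simp only [Y, hW2, hW1, Fin.sum_univ_three, Matrix.cons_val_zero, Matrix.cons_val_one,
      Matrix.cons_val_two, Matrix.head_cons, Matrix.tail_cons]
    linear_combination (X _) * ha12
  rw [hW1', hW2', hX]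
  simp only [sq, integral_sum_mul_sum_of_pairwise_integral_mul_eq_zero hY hYorth,
    integral_sum_of_integral_eq_zero (fun i => (hY i).integrable one_le_two) hYmean]
  simp only [Fin.sum_univ_three, Y, Matrix.cons_val_zero, Matrix.cons_val_one, Matrix.cons_val_two,
    Matrix.head_cons, Matrix.tail_cons, ← sq, hXvar, hN1var, hN2var]
  refine ⟨trivial, trivial, by ring, by ring, by ring, ?_, ?_⟩
  · rw [ha2]
    field_simp
    linear_combination (s0 + √s2 ^ 2) * Real.sq_sqrt hs1 + (s0 + s1) * Real.sq_sqrt hs2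
  · rw [ha2, mul_assoc, div_mul_cancel₀ _ hs01.ne']; ring

/-- Successive quantization via ECDQ (additive-noise model): the second-moment matrix of
`(X, W₁, W₂)` equals that of the Gaussian MD test channel `(X, U₁, U₂)`. Explicitly:
`E[W₁] = E[W₂] = 0`, `E[X·W₁] = E[X·W₂] = σ²`, `E[W₁²] = σ² + s0 + s1`,
`E[W₂²] = σ² + s0 + s2`, and `E[W₁·W₂] = σ² + s0 − σT1·σT2`. -/
theorem successive_quantization_second_moments
    {Ω : Type*} [MeasurableSpace Ω] (μ : Measure Ω) [IsProbabilityMeasure μ]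
    (σ2 D1 D2 D3 s0 s1 s2 : ℝ)
    (hσ : 0 < σ2)
    (hD3pos : 0 < D3) (hD3leD1 : D3 ≤ D1) (hD1 : D1 < σ2)
    (hD3leD2 : D3 ≤ D2) (hD2 : D2 < σ2)
    (hs0 : s0 = D3 * σ2 / (σ2 - D3))
    (hs1 : s1 = D1 * σ2 / (σ2 - D1) - s0)
    (hs2 : s2 = D2 * σ2 / (σ2 - D2) - s0)
    (a1 a2 : ℝ)
    (ha1 : a1 = (s1 + Real.sqrt s1 * Real.sqrt s2) / (s0 + s1))
    (ha2 : a2 = (s0 - Real.sqrt s1 * Real.sqrt s2) / (s0 + s1))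
    (X N1 N2 : Ω → ℝ)
    (hX2 : MemLp X 2 μ) (hN12 : MemLp N1 2 μ) (hN22 : MemLp N2 2 μ)
    (hXmean : ∫ ω, X ω ∂μ = 0) (hN1mean : ∫ ω, N1 ω ∂μ = 0) (hN2mean : ∫ ω, N2 ω ∂μ = 0)
    (hXvar : ∫ ω, (X ω) ^ 2 ∂μ = σ2)
    (hN1var : ∫ ω, (N1 ω) ^ 2 ∂μ = s0 + s1)
    (hN2var : ∫ ω, (N2 ω) ^ 2 ∂μ
      = s0 * (Real.sqrt s1 + Real.sqrt s2) ^ 2 / (s0 + s1))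
    -- `X, N1, N2` are mutually independent
    (hIndep1 : IndepFun X N1 μ)
    (hIndep2 : IndepFun (fun ω => (X ω, N1 ω)) N2 μ)
    (W1 W2 : Ω → ℝ)
    (hW1 : W1 = fun ω => X ω + N1 ω)
    (hW2 : W2 = fun ω => a1 * X ω + a2 * W1 ω + N2 ω) :
    (∫ ω, W1 ω ∂μ = 0) ∧ (∫ ω, W2 ω ∂μ = 0) ∧
    (∫ ω, X ω * W1 ω ∂μ = σ2) ∧ (∫ ω, X ω * W2 ω ∂μ = σ2) ∧
    (∫ ω, (W1 ω) ^ 2 ∂μ = σ2 + s0 + s1) ∧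
    (∫ ω, (W2 ω) ^ 2 ∂μ = σ2 + s0 + s2) ∧
    (∫ ω, W1 ω * W2 ω ∂μ = σ2 + s0 - Real.sqrt s1 * Real.sqrt s2) :=
  successive_quantization_second_moments_general μ σ2 D1 D2 D3 s0 s1 s2 hD3pos hD3leD1 hD1 hD3leD2
    hD2 hs0 hs1 hs2 a1 a2 ha1 ha2 X N1 N2 hX2 hN12 hN22 hXmean hN1mean hN2mean hXvar hN1var hN2var
    hIndep1 hIndep2 W1 W2 hW1 hW2
end

section
/- The second-moment matrix of (X, W̃_1, W̃_2, W'_2, Δ) equals the second-moment matrix of (X, U1, U2, U'2, U2 − b*6·U'2); in particular E[X·W̃_i] = σ², E[W̃_1²] = σ² + s0 + s1, E[W̃_2²] = σ² + s0 + s2, E[W̃_1·W̃_2] = σ² + s0 − σT1·σT2, E[W'_2²] = σ² + s0 + s2 + s3, E[W'_2·W̃_1] = σ² + s0 − σT1·σT2, and E[W'_2·W̃_2] = σ² + s0 + s2. -/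
/-!
Everything is linear in `X, N1, N2, N3`, which are pairwise uncorrelated, so every second moment
is a weighted sum of their variances. In these coordinates `W'₂ = X + N1`,
`W̃₁ = X + b*₂ N1 + N2` and `W̃₂ = X + (s0 + s2)/(s0 + s2 + s3) N1 + b8 N2 + N3`; the first two
coordinates of `W̃₂` are free of `b8` because `1 - b4 = b5 (1 - b3)` and `b*₂ - b4 = -b3 b5`.
What is left are rational identities in `σ², s0, s1, s2, s3, √s1 √s2`, whose only non-formal
input is `(√s1 √s2)² = s1 s2`.
-/

open MeasureTheory ProbabilityTheory

section SecondMoments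

variable {Ω : Type*} [MeasurableSpace Ω] {μ : Measure Ω}

theorem ProbabilityTheory.IndepFun.integral_mul_eq_zero_of_integral_right {X Y : Ω → ℝ}
    (h : IndepFun X Y μ) (hX : AEStronglyMeasurable X μ) (hY : AEStronglyMeasurable Y μ)
    (hY0 : ∫ ω, Y ω ∂μ = 0) :
    ∫ ω, X ω * Y ω ∂μ = 0 := by
  rw [h.integral_fun_mul_eq_mul_integral hX hY, hY0, mul_zero]

theorem integral_sum_mul_sum_of_pairwise {ι : Type*} [Fintype ι] {Y : ι → Ω → ℝ}
    (hY : ∀ i, MemLp (Y i) 2 μ) (horth : Pairwise fun i j => ∫ ω, Y i ω * Y j ω ∂μ = 0)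
    (a b : ι → ℝ) :
    ∫ ω, (∑ i, a i * Y i ω) * (∑ j, b j * Y j ω) ∂μ = ∑ i, a i * b i * ∫ ω, Y i ω ^ 2 ∂μ := by
  have hint : ∀ i j, Integrable (fun ω => a i * b j * (Y i ω * Y j ω)) μ :=
    fun i j => ((hY i).integrable_mul (hY j)).const_mul _
  calc ∫ ω, (∑ i, a i * Y i ω) * (∑ j, b j * Y j ω) ∂μ
      = ∫ ω, ∑ i, ∑ j, a i * b j * (Y i ω * Y j ω) ∂μ := by
        simp_rw [Finset.sum_mul_sum, mul_mul_mul_comm]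
    _ = ∑ i, ∑ j, a i * b j * ∫ ω, Y i ω * Y j ω ∂μ := by
        rw [integral_finsetSum _ fun i _ => integrable_finsetSum _ fun j _ => hint i j]
        simp_rw [integral_finsetSum _ fun j _ => hint _ j, integral_const_mul]
    _ = ∑ i, a i * b i * ∫ ω, Y i ω ^ 2 ∂μ := by
        refine Finset.sum_congr rfl fun i _ => ?_
        rw [Finset.sum_eq_single i (fun j _ hji => by rw [horth hji.symm, mul_zero])
          (by simp)]
        simp_rw [sq]

end SecondMoments

section Model

variable {Ω : Type*} [MeasurableSpace Ω] {μ : Measure Ω} {X N1 N2 N3 : Ω → ℝ}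

theorem pairwise_integral_mul_eq_zero_of_indepFun_s2
    (hX2 : MemLp X 2 μ) (hN12 : MemLp N1 2 μ) (hN22 : MemLp N2 2 μ) (hN32 : MemLp N3 2 μ)
    (hN1mean : ∫ ω, N1 ω ∂μ = 0) (hN2mean : ∫ ω, N2 ω ∂μ = 0) (hN3mean : ∫ ω, N3 ω ∂μ = 0)
    (hIndep1 : IndepFun X N1 μ)
    (hIndep2 : IndepFun (fun ω => (X ω, N1 ω)) N2 μ)
    (hIndep3 : IndepFun (fun ω => (X ω, N1 ω, N2 ω)) N3 μ) :
    Pairwise fun i j => ∫ ω, ![X, N1, N2, N3] i ω * ![X, N1, N2, N3] j ω ∂μ = 0 := by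
  have h01 := hIndep1.integral_mul_eq_zero_of_integral_right
    hX2.aestronglyMeasurable hN12.aestronglyMeasurable hN1mean
  have h02 := (hIndep2.comp measurable_fst measurable_id).integral_mul_eq_zero_of_integral_right
    hX2.aestronglyMeasurable hN22.aestronglyMeasurable hN2mean
  have h12 := (hIndep2.comp measurable_snd measurable_id).integral_mul_eq_zero_of_integral_right
    hN12.aestronglyMeasurable hN22.aestronglyMeasurable hN2mean
  have h03 := (hIndep3.comp measurable_fst measurable_id).integral_mul_eq_zero_of_integral_right
    hX2.aestronglyMeasurable hN32.aestronglyMeasurable hN3mean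
  have h13 := (hIndep3.comp (measurable_fst.comp measurable_snd)
    measurable_id).integral_mul_eq_zero_of_integral_right
    hN12.aestronglyMeasurable hN32.aestronglyMeasurable hN3mean
  have h23 := (hIndep3.comp (measurable_snd.comp measurable_snd)
    measurable_id).integral_mul_eq_zero_of_integral_right
    hN22.aestronglyMeasurable hN32.aestronglyMeasurable hN3mean
  intro i j hij
  fin_cases i <;> fin_cases j <;> simp at hij ⊢ <;>
    first
    | assumption
    | rw [← integral_congr_ae (.of_forall fun ω => mul_comm _ _)]; assumption

end Model

theorem mul_div_sub_le_mul_div_sub_s2 {a b c : ℝ} (hab : a ≤ b) (hbc : b < c) :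
    a * c / (c - a) ≤ b * c / (c - b) := by
  rw [div_le_div_iff₀ (by linarith) (by linarith)]
  nlinarith [mul_nonneg (sq_nonneg c) (sub_nonneg.2 hab)]

theorem splitting_coeffs {σ2 s0 s2 s3 t b3 b4 b5 b6 b7 b8 bs1 bs2 bs3 bs4 bs5 bs6 : ℝ}
    (hP : s0 + s2 + s3 ≠ 0) (hQ : σ2 + s0 + s2 + s3 ≠ 0)
    (hb3 : b3 = σ2 / (σ2 + s0 + s2 + s3))
    (hb4 : b4 = (σ2 + s0 - t) / (σ2 + s0 + s2 + s3))
    (hb5 : b5 = (s2 + s3 + t) / (s0 + s2 + s3))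
    (hb6 : b6 = (σ2 + s0 + s2) / (σ2 + s0 + s2 + s3))
    (hb7 : b7 = s3 / (s0 + s2 + s3))
    (hbs1 : bs1 = (s2 + s3 + t) / (s0 + s2 + s3))
    (hbs2 : bs2 = (s0 - t) / (s0 + s2 + s3))
    (hbs3 : bs3 = b7 - b5 * b8) (hbs4 : bs4 = b8)
    (hbs5 : bs5 = b3 * b5 * b8 - b3 * b7 - b4 * b8) (hbs6 : bs6 = b6) :
    bs1 + bs2 = 1 ∧ bs3 + bs4 + bs5 + bs6 = 1 ∧
      bs4 * bs2 + bs5 + bs6 = (s0 + s2) / (s0 + s2 + s3) := by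
  subst hb3 hb4 hb5 hb6 hb7 hbs1 hbs2 hbs3 hbs4 hbs5 hbs6
  refine ⟨?_, ?_, ?_⟩ <;> field_simp <;> ring

theorem quantization_splitting_second_moments_general
    {Ω : Type*} [MeasurableSpace Ω] (μ : Measure Ω)
    (σ2 D1 D2 D3 s0 s1 s2 s3 : ℝ)
    (hD3pos : 0 < D3) (hD3leD1 : D3 ≤ D1) (hD1 : D1 < σ2)
    (hD3leD2 : D3 ≤ D2) (hD2 : D2 < σ2)
    (hs0 : s0 = D3 * σ2 / (σ2 - D3))
    (hs1 : s1 = D1 * σ2 / (σ2 - D1) - s0)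
    (hs2 : s2 = D2 * σ2 / (σ2 - D2) - s0)
    (hs3 : 0 ≤ s3)
    (hpos : 0 < s0 * (Real.sqrt s1 + Real.sqrt s2) ^ 2 + s3 * (s0 + s1))
    (b3 b4 b5 b6 b7 b8 bs1 bs2 bs3 bs4 bs5 bs6 v3 : ℝ)
    (hb3 : b3 = σ2 / (σ2 + s0 + s2 + s3))
    (hb4 : b4 = (σ2 + s0 - Real.sqrt s1 * Real.sqrt s2) / (σ2 + s0 + s2 + s3))
    (hb5 : b5 = (s2 + s3 + Real.sqrt s1 * Real.sqrt s2) / (s0 + s2 + s3))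
    (hb6 : b6 = (σ2 + s0 + s2) / (σ2 + s0 + s2 + s3))
    (hb7 : b7 = s3 / (s0 + s2 + s3))
    (hb8 : b8 = s3 * (s0 - Real.sqrt s1 * Real.sqrt s2) /
      (s0 * (Real.sqrt s1 + Real.sqrt s2) ^ 2 + s3 * (s0 + s1)))
    (hbs1 : bs1 = (s2 + s3 + Real.sqrt s1 * Real.sqrt s2) / (s0 + s2 + s3))
    (hbs2 : bs2 = (s0 - Real.sqrt s1 * Real.sqrt s2) / (s0 + s2 + s3))
    (hbs3 : bs3 = b7 - b5 * b8)
    (hbs4 : bs4 = b8)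
    (hbs5 : bs5 = b3 * b5 * b8 - b3 * b7 - b4 * b8)
    (hbs6 : bs6 = b6)
    (hv3 : v3 = s3 * (σ2 + s0 + s2) / (σ2 + s0 + s2 + s3)
      - σ2 * s3 ^ 2 / ((σ2 + s0 + s2 + s3) * (s0 + s2 + s3))
      - s3 ^ 2 * (s0 - Real.sqrt s1 * Real.sqrt s2) ^ 2 /
        ((s0 * (Real.sqrt s1 + Real.sqrt s2) ^ 2 + s3 * (s0 + s1)) * (s0 + s2 + s3)))
    (X N1 N2 N3 : Ω → ℝ)
    (hX2 : MemLp X 2 μ) (hN12 : MemLp N1 2 μ) (hN22 : MemLp N2 2 μ) (hN32 : MemLp N3 2 μ)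
    (hN1mean : ∫ ω, N1 ω ∂μ = 0)
    (hN2mean : ∫ ω, N2 ω ∂μ = 0) (hN3mean : ∫ ω, N3 ω ∂μ = 0)
    (hXvar : ∫ ω, (X ω) ^ 2 ∂μ = σ2)
    (hN1var : ∫ ω, (N1 ω) ^ 2 ∂μ = s0 + s2 + s3)
    (hN2var : ∫ ω, (N2 ω) ^ 2 ∂μ
      = (s0 * (Real.sqrt s1 + Real.sqrt s2) ^ 2 + s3 * (s0 + s1)) / (s0 + s2 + s3))
    (hN3var : ∫ ω, (N3 ω) ^ 2 ∂μ = v3)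
    -- `X, N1, N2, N3` are mutually independent
    (hIndep1 : IndepFun X N1 μ)
    (hIndep2 : IndepFun (fun ω => (X ω, N1 ω)) N2 μ)
    (hIndep3 : IndepFun (fun ω => (X ω, N1 ω, N2 ω)) N3 μ)
    (W2' Wt1 Δ Wt2 : Ω → ℝ)
    (hW2' : W2' = fun ω => X ω + N1 ω)
    (hWt1 : Wt1 = fun ω => bs1 * X ω + bs2 * W2' ω + N2 ω)
    (hΔ : Δ = fun ω => bs3 * X ω + bs4 * Wt1 ω + bs5 * W2' ω + N3 ω)
    (hWt2 : Wt2 = fun ω => Δ ω + bs6 * W2' ω) :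
    (∫ ω, X ω * Wt1 ω ∂μ = σ2) ∧ (∫ ω, X ω * Wt2 ω ∂μ = σ2) ∧
    (∫ ω, (Wt1 ω) ^ 2 ∂μ = σ2 + s0 + s1) ∧
    (∫ ω, (Wt2 ω) ^ 2 ∂μ = σ2 + s0 + s2) ∧
    (∫ ω, Wt1 ω * Wt2 ω ∂μ = σ2 + s0 - Real.sqrt s1 * Real.sqrt s2) ∧
    (∫ ω, (W2' ω) ^ 2 ∂μ = σ2 + s0 + s2 + s3) ∧
    (∫ ω, W2' ω * Wt1 ω ∂μ = σ2 + s0 - Real.sqrt s1 * Real.sqrt s2) ∧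
    (∫ ω, W2' ω * Wt2 ω ∂μ = σ2 + s0 + s2) := by
  have hσ : 0 < σ2 := by linarith
  have hs0pos : 0 < s0 := hs0 ▸ div_pos (by positivity) (by linarith)
  have hs1nn : 0 ≤ s1 := hs1 ▸ hs0 ▸ sub_nonneg.2 (mul_div_sub_le_mul_div_sub_s2 hD3leD1 hD1)
  have hs2nn : 0 ≤ s2 := hs2 ▸ hs0 ▸ sub_nonneg.2 (mul_div_sub_le_mul_div_sub_s2 hD3leD2 hD2)
  have hP : 0 < s0 + s2 + s3 := by positivity
  have hQ : 0 < σ2 + s0 + s2 + s3 := by positivity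
  obtain ⟨hc1, hc2, hc3⟩ := splitting_coeffs hP.ne' hQ.ne' hb3 hb4 hb5 hb6 hb7 hbs1 hbs2 hbs3
    hbs4 hbs5 hbs6
  set Y : Fin 4 → Ω → ℝ := ![X, N1, N2, N3]
  have hmom := integral_sum_mul_sum_of_pairwise (Y := Y) (fun i => by fin_cases i <;> assumption)
    (pairwise_integral_mul_eq_zero_of_indepFun_s2 hX2 hN12 hN22 hN32 hN1mean hN2mean hN3mean
      hIndep1 hIndep2 hIndep3)
  have hXc : ∀ ω, X ω = ∑ i, ![1, 0, 0, 0] i * Y i ω := by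
    intro ω; simp only [Fin.sum_univ_four, Y, Matrix.cons_val]; ring
  have hW2c : ∀ ω, W2' ω = ∑ i, ![1, 1, 0, 0] i * Y i ω := by
    intro ω; simp only [Fin.sum_univ_four, Y, Matrix.cons_val, hW2']; ring
  have hWt1c : ∀ ω, Wt1 ω = ∑ i, ![1, bs2, 1, 0] i * Y i ω := by
    intro ω; simp only [Fin.sum_univ_four, Y, Matrix.cons_val, hWt1, hW2']
    linear_combination X ω * hc1
  have hWt2c : ∀ ω, Wt2 ω = ∑ i, ![1, (s0 + s2) / (s0 + s2 + s3), bs4, 1] i * Y i ω := by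
    intro ω; simp only [Fin.sum_univ_four, Y, Matrix.cons_val, hWt2, hΔ, hWt1, hW2']
    linear_combination X ω * hc2 + N1 ω * hc3 + bs4 * X ω * hc1
  simp only [sq, hXc, hW2c, hWt1c, hWt2c]
  simp only [hmom]
  simp only [Fin.sum_univ_four, Y, Matrix.cons_val, hXvar, hN1var, hN2var, hN3var, one_mul,
    mul_one, zero_mul, add_zero, true_and]
  have hR := hpos.ne'
  subst hbs2 hbs4 hb8 hv3
  refine ⟨?_, ?_, ?_, by ring, ?_, ?_⟩ <;> field_simp
  · linear_combination (s0 + √s2 ^ 2) * Real.sq_sqrt hs1nn + (s0 + s1) * Real.sq_sqrt hs2nn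
  all_goals ring

/-- Successive quantization with quantization splitting via ECDQ (additive-noise model):
the second-moment matrix of `(X, W̃₁, W̃₂, W'₂, Δ)` equals that of
`(X, U₁, U₂, U'₂, U₂ − b₆* U'₂)` in the Gaussian scheme; in particular the listed
second moments hold. -/
theorem quantization_splitting_second_moments
    {Ω : Type*} [MeasurableSpace Ω] (μ : Measure Ω) [IsProbabilityMeasure μ]
    (σ2 D1 D2 D3 s0 s1 s2 s3 : ℝ)
    (hσ : 0 < σ2)
    (hD3pos : 0 < D3) (hD3leD1 : D3 ≤ D1) (hD1 : D1 < σ2)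
    (hD3leD2 : D3 ≤ D2) (hD2 : D2 < σ2)
    (hs0 : s0 = D3 * σ2 / (σ2 - D3))
    (hs1 : s1 = D1 * σ2 / (σ2 - D1) - s0)
    (hs2 : s2 = D2 * σ2 / (σ2 - D2) - s0)
    (hs3 : 0 ≤ s3)
    (hpos : 0 < s0 * (Real.sqrt s1 + Real.sqrt s2) ^ 2 + s3 * (s0 + s1))
    (b3 b4 b5 b6 b7 b8 bs1 bs2 bs3 bs4 bs5 bs6 v3 : ℝ)
    (hb3 : b3 = σ2 / (σ2 + s0 + s2 + s3))
    (hb4 : b4 = (σ2 + s0 - Real.sqrt s1 * Real.sqrt s2) / (σ2 + s0 + s2 + s3))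
    (hb5 : b5 = (s2 + s3 + Real.sqrt s1 * Real.sqrt s2) / (s0 + s2 + s3))
    (hb6 : b6 = (σ2 + s0 + s2) / (σ2 + s0 + s2 + s3))
    (hb7 : b7 = s3 / (s0 + s2 + s3))
    (hb8 : b8 = s3 * (s0 - Real.sqrt s1 * Real.sqrt s2) /
      (s0 * (Real.sqrt s1 + Real.sqrt s2) ^ 2 + s3 * (s0 + s1)))
    (hbs1 : bs1 = (s2 + s3 + Real.sqrt s1 * Real.sqrt s2) / (s0 + s2 + s3))
    (hbs2 : bs2 = (s0 - Real.sqrt s1 * Real.sqrt s2) / (s0 + s2 + s3))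
    (hbs3 : bs3 = b7 - b5 * b8)
    (hbs4 : bs4 = b8)
    (hbs5 : bs5 = b3 * b5 * b8 - b3 * b7 - b4 * b8)
    (hbs6 : bs6 = b6)
    (hv3 : v3 = s3 * (σ2 + s0 + s2) / (σ2 + s0 + s2 + s3)
      - σ2 * s3 ^ 2 / ((σ2 + s0 + s2 + s3) * (s0 + s2 + s3))
      - s3 ^ 2 * (s0 - Real.sqrt s1 * Real.sqrt s2) ^ 2 /
        ((s0 * (Real.sqrt s1 + Real.sqrt s2) ^ 2 + s3 * (s0 + s1)) * (s0 + s2 + s3)))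
    (X N1 N2 N3 : Ω → ℝ)
    (hX2 : MemLp X 2 μ) (hN12 : MemLp N1 2 μ) (hN22 : MemLp N2 2 μ) (hN32 : MemLp N3 2 μ)
    (hXmean : ∫ ω, X ω ∂μ = 0) (hN1mean : ∫ ω, N1 ω ∂μ = 0)
    (hN2mean : ∫ ω, N2 ω ∂μ = 0) (hN3mean : ∫ ω, N3 ω ∂μ = 0)
    (hXvar : ∫ ω, (X ω) ^ 2 ∂μ = σ2)
    (hN1var : ∫ ω, (N1 ω) ^ 2 ∂μ = s0 + s2 + s3)
    (hN2var : ∫ ω, (N2 ω) ^ 2 ∂μ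
      = (s0 * (Real.sqrt s1 + Real.sqrt s2) ^ 2 + s3 * (s0 + s1)) / (s0 + s2 + s3))
    (hN3var : ∫ ω, (N3 ω) ^ 2 ∂μ = v3)
    -- `X, N1, N2, N3` are mutually independent
    (hIndep1 : IndepFun X N1 μ)
    (hIndep2 : IndepFun (fun ω => (X ω, N1 ω)) N2 μ)
    (hIndep3 : IndepFun (fun ω => (X ω, N1 ω, N2 ω)) N3 μ)
    (W2' Wt1 Δ Wt2 : Ω → ℝ)
    (hW2' : W2' = fun ω => X ω + N1 ω)
    (hWt1 : Wt1 = fun ω => bs1 * X ω + bs2 * W2' ω + N2 ω)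
    (hΔ : Δ = fun ω => bs3 * X ω + bs4 * Wt1 ω + bs5 * W2' ω + N3 ω)
    (hWt2 : Wt2 = fun ω => Δ ω + bs6 * W2' ω) :
    (∫ ω, X ω * Wt1 ω ∂μ = σ2) ∧ (∫ ω, X ω * Wt2 ω ∂μ = σ2) ∧
    (∫ ω, (Wt1 ω) ^ 2 ∂μ = σ2 + s0 + s1) ∧
    (∫ ω, (Wt2 ω) ^ 2 ∂μ = σ2 + s0 + s2) ∧
    (∫ ω, Wt1 ω * Wt2 ω ∂μ = σ2 + s0 - Real.sqrt s1 * Real.sqrt s2) ∧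
    (∫ ω, (W2' ω) ^ 2 ∂μ = σ2 + s0 + s2 + s3) ∧
    (∫ ω, W2' ω * Wt1 ω ∂μ = σ2 + s0 - Real.sqrt s1 * Real.sqrt s2) ∧
    (∫ ω, W2' ω * Wt2 ω ∂μ = σ2 + s0 + s2) :=
  quantization_splitting_second_moments_general μ σ2 D1 D2 D3 s0 s1 s2 s3 hD3pos hD3leD1 hD1 hD3leD2
    hD2 hs0 hs1 hs2 hs3 hpos b3 b4 b5 b6 b7 b8 bs1 bs2 bs3 bs4 bs5 bs6 v3 hb3 hb4 hb5 hb6 hb7 hb8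
    hbs1 hbs2 hbs3 hbs4 hbs5 hbs6 hv3 X N1 N2 N3 hX2 hN12 hN22 hN32 hN1mean hN2mean hN3mean hXvar
    hN1var hN2var hN3var hIndep1 hIndep2 hIndep3 W2' Wt1 Δ Wt2 hW2' hWt1 hΔ hWt2
end

section
/- Assume additionally D3 < max(D1, D2) and D1 + D2 − σ² ≤ D3 ≤ (1/D1 + 1/D2 − 1/σ²)^{−1}. Then (σ² + s0 + s1)·(σ² + s0 + s2) / (s0·(σT1 + σT2)²) = (σ²/D3) · ψ(D1,D2,D3). Consequently the Gaussian sum-rate expression I(X;U1)+I(X;U2)+I(U1;U2|X) equals (1/2)·log(σ²/D3) + (1/2)·log ψ(D1,D2,D3). -/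
set_option maxHeartbeats 1000000

/-- In the Gaussian MD test channel, the sum-rate expression
`I(X;U1)+I(X;U2)+I(U1;U2|X) = (1/2)log((σ²+s0+s1)(σ²+s0+s2)/(s0(σT1+σT2)²))`
equals `(1/2)log(σ²/D3) + (1/2)log ψ(D1,D2,D3)`. -/
theorem gaussian_sum_rate_eq
    (σ2 D1 D2 D3 s0 s1 s2 ψ : ℝ)
    (hσ : 0 < σ2)
    (hD3pos : 0 < D3) (hD3leD1 : D3 ≤ D1) (hD1 : D1 < σ2)
    (hD3leD2 : D3 ≤ D2) (hD2 : D2 < σ2)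
    (hs0 : s0 = D3 * σ2 / (σ2 - D3))
    (hs1 : s1 = D1 * σ2 / (σ2 - D1) - s0)
    (hs2 : s2 = D2 * σ2 / (σ2 - D2) - s0)
    (hψ : ψ = (σ2 - D3) ^ 2 /
      ((σ2 - D3) ^ 2 -
        (Real.sqrt ((σ2 - D1) * (σ2 - D2)) - Real.sqrt ((D1 - D3) * (D2 - D3))) ^ 2))
    (hmax : D3 < max D1 D2)
    (hlow : D1 + D2 - σ2 ≤ D3)
    (hup : D3 ≤ (1 / D1 + 1 / D2 - 1 / σ2)⁻¹) :
    (σ2 + s0 + s1) * (σ2 + s0 + s2) / (s0 * (Real.sqrt s1 + Real.sqrt s2) ^ 2)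
      = (σ2 / D3) * ψ ∧
    (1 / 2) * Real.log
        ((σ2 + s0 + s1) * (σ2 + s0 + s2) / (s0 * (Real.sqrt s1 + Real.sqrt s2) ^ 2))
      = (1 / 2) * Real.log (σ2 / D3) + (1 / 2) * Real.log ψ := by
  have ha : (0:ℝ) < σ2 - D1 := by linarith
  have hb : (0:ℝ) < σ2 - D2 := by linarith
  have hc : (0:ℝ) < σ2 - D3 := by linarith
  have hp : (0:ℝ) ≤ D1 - D3 := by linarith
  have hq : (0:ℝ) ≤ D2 - D3 := by linarith
  set R := Real.sqrt ((σ2 - D1) * (σ2 - D2)) with hRdef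
  set S := Real.sqrt ((D1 - D3) * (D2 - D3)) with hSdef
  have hR2 : R ^ 2 = (σ2 - D1) * (σ2 - D2) := Real.sq_sqrt (by positivity)
  have hS2 : S ^ 2 = (D1 - D3) * (D2 - D3) := Real.sq_sqrt (by positivity)
  have hRpos : 0 < R := Real.sqrt_pos.mpr (by positivity)
  have hSnn : 0 ≤ S := Real.sqrt_nonneg _
  -- N
  set N := (D1 - D3) * (σ2 - D2) + (D2 - D3) * (σ2 - D1) + 2 * R * S with hNdef
  have hNpos : 0 < N := by
    rcases lt_max_iff.mp hmax with h | h
    · nlinarith [mul_nonneg hRpos.le hSnn]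
    · nlinarith [mul_nonneg hRpos.le hSnn]
  have hden : (σ2 - D3) ^ 2 - (R - S) ^ 2 = N := by
    rw [hNdef]; linear_combination -hR2 - hS2
  have hψval : ψ = (σ2 - D3) ^ 2 / N := by rw [hψ, hden]
  -- explicit forms
  have es1 : s1 = σ2 ^ 2 * (D1 - D3) / ((σ2 - D1) * (σ2 - D3)) := by
    rw [hs1, hs0]; field_simp; ring
  have es2 : s2 = σ2 ^ 2 * (D2 - D3) / ((σ2 - D2) * (σ2 - D3)) := by
    rw [hs2, hs0]; field_simp; ring
  have hs1nn : 0 ≤ s1 := by rw [es1]; positivity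
  have hs2nn : 0 ≤ s2 := by rw [es2]; positivity
  have e1 : σ2 + s0 + s1 = σ2 ^ 2 / (σ2 - D1) := by
    rw [hs1, hs0]; field_simp; ring
  have e2 : σ2 + s0 + s2 = σ2 ^ 2 / (σ2 - D2) := by
    rw [hs2, hs0]; field_simp; ring
  -- sqrt product
  have hsq : Real.sqrt s1 * Real.sqrt s2
      = σ2 ^ 2 * S * R / (((σ2 - D1) * (σ2 - D2)) * (σ2 - D3)) := by
    rw [← Real.sqrt_mul hs1nn]
    have hnum : (σ2 ^ 2 * S * R) ^ 2
        = σ2 ^ 4 * ((D1 - D3) * (D2 - D3)) * ((σ2 - D1) * (σ2 - D2)) := by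
      rw [mul_pow, mul_pow, hS2, hR2]; ring
    have h1 : s1 * s2 = (σ2 ^ 2 * S * R / (((σ2 - D1) * (σ2 - D2)) * (σ2 - D3))) ^ 2 := by
      rw [es1, es2, div_pow, hnum]
      field_simp
    rw [h1, Real.sqrt_sq (by positivity)]
  -- T^2
  have hT : (Real.sqrt s1 + Real.sqrt s2) ^ 2
      = σ2 ^ 2 * N / ((σ2 - D1) * (σ2 - D2) * (σ2 - D3)) := by
    have expand : (Real.sqrt s1 + Real.sqrt s2) ^ 2
        = s1 + s2 + 2 * (Real.sqrt s1 * Real.sqrt s2) := by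
      have h1 := Real.sq_sqrt hs1nn
      have h2 := Real.sq_sqrt hs2nn
      ring_nf
      nlinarith [h1, h2]
    rw [expand, hsq, es1, es2, hNdef]
    field_simp
  have key : (σ2 + s0 + s1) * (σ2 + s0 + s2) / (s0 * (Real.sqrt s1 + Real.sqrt s2) ^ 2)
      = (σ2 / D3) * ψ := by
    rw [e1, e2, hT, hs0, hψval]
    field_simp
  refine ⟨key, ?_⟩
  rw [key, Real.log_mul (by positivity) (by rw [hψval]; positivity)]
  ring
end

section
/- Assume additionally D3 < max(D1, D2) and D1 + D2 − σ² ≤ D3 ≤ (1/D1 + 1/D2 − 1/σ²)^{−1}. Then the vertex V1 of the Gaussian rate region satisfies: (σ² + s0 + s1)/(s0 + s1) = σ²/D1, and (σ² + s0 + s2)·(s0 + s1) / (s0·(σT1 + σT2)²) = (D1/D3) · ψ(D1,D2,D3). That is, R1(V1) = (1/2)log(σ²/D1) and R2(V1) = (1/2)log(D1/D3) + (1/2)log ψ(D1,D2,D3). -/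
/-!
Write `a, b, c = σ² - D1, σ² - D2, σ² - D3` and `u, v = D1 - D3, D2 - D3`, so that
`c = a + u = b + v`. The test-channel variances satisfy `s1 = k u b` and `s2 = k v a` with
`k = σ⁴ / (a b c)`, hence `(√s1 + √s2)² = k (u b + v a + 2 √(a b u v))`. The constraint
`c = a + u = b + v` turns `u b + v a` into `c² - a b - u v`, so the bracket is exactly the
denominator `c² - (√(ab) - √(uv))²` of `ψ`, and both rate identities reduce to clearing
denominators.
-/

open Real

/-- The noise variance `s` of the test channel `X ↦ X + N(0, s)` for `X ∼ N(0, σ²)` whose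
estimation error `σ² s / (σ² + s)` equals `D`. -/
noncomputable def testChannelVariance (σ2 D : ℝ) : ℝ := D * σ2 / (σ2 - D)

section TestChannelVariance

variable {σ2 D D' : ℝ}

theorem add_testChannelVariance (h : σ2 - D ≠ 0) :
    σ2 + testChannelVariance σ2 D = σ2 ^ 2 / (σ2 - D) := by
  unfold testChannelVariance
  field_simp
  ring

theorem add_testChannelVariance_div_testChannelVariance (hσ : σ2 ≠ 0) (h : σ2 - D ≠ 0) :
    (σ2 + testChannelVariance σ2 D) / testChannelVariance σ2 D = σ2 / D := by
  rw [add_testChannelVariance h, testChannelVariance]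
  field_simp

theorem testChannelVariance_sub_testChannelVariance (h : σ2 - D ≠ 0) (h' : σ2 - D' ≠ 0) :
    testChannelVariance σ2 D - testChannelVariance σ2 D' =
      σ2 ^ 2 * (D - D') / ((σ2 - D) * (σ2 - D')) := by
  unfold testChannelVariance
  field_simp
  ring

end TestChannelVariance

theorem sq_sqrt_mul_add_sqrt_mul {k p q : ℝ} (hk : 0 ≤ k) (hp : 0 ≤ p) (hq : 0 ≤ q) :
    (√(k * p) + √(k * q)) ^ 2 = k * (p + q + 2 * √(p * q)) := by
  have hcross : √(k * p) * √(k * q) = k * √(p * q) := by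
    rw [← sqrt_mul (by positivity), show k * p * (k * q) = k ^ 2 * (p * q) by ring,
      sqrt_mul (by positivity), sqrt_sq hk]
  rw [add_sq, sq_sqrt (by positivity), sq_sqrt (by positivity), mul_assoc 2, hcross]
  ring

section SqrtGap

variable {a b c u v : ℝ}

theorem sq_sub_sq_sqrt_sub_sqrt (ha : 0 ≤ a) (hb : 0 ≤ b) (hu : 0 ≤ u) (hv : 0 ≤ v)
    (hac : a + u = c) (hbc : b + v = c) :
    c ^ 2 - (√(a * b) - √(u * v)) ^ 2 = u * b + v * a + 2 * √(u * b * (v * a)) := by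
  have hcross : √(u * b * (v * a)) = √(a * b) * √(u * v) := by
    rw [← sqrt_mul (by positivity)]
    ring_nf
  rw [hcross]
  linear_combination -sq_sqrt (mul_nonneg ha hb) - sq_sqrt (mul_nonneg hu hv) - c * hbc -
    (b + v) * hac

theorem sq_sub_sq_sqrt_sub_sqrt_pos (ha : 0 < a) (hb : 0 < b) (hu : 0 ≤ u) (hv : 0 ≤ v)
    (huv : 0 < u ∨ 0 < v) (hac : a + u = c) (hbc : b + v = c) :
    0 < c ^ 2 - (√(a * b) - √(u * v)) ^ 2 := by
  rw [sq_sub_sq_sqrt_sub_sqrt ha.le hb.le hu hv hac hbc]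
  rcases huv with hu | hv
  · have : 0 < u * b := mul_pos hu hb
    positivity
  · have : 0 < v * a := mul_pos hv ha
    positivity

end SqrtGap

theorem sq_sqrt_testChannelVariance_sub_add_sqrt {σ2 D1 D2 D3 : ℝ} (hD3D1 : D3 ≤ D1)
    (hD1 : D1 < σ2) (hD3D2 : D3 ≤ D2) (hD2 : D2 < σ2) :
    (√(testChannelVariance σ2 D1 - testChannelVariance σ2 D3) +
        √(testChannelVariance σ2 D2 - testChannelVariance σ2 D3)) ^ 2 =
      σ2 ^ 2 / ((σ2 - D1) * (σ2 - D2) * (σ2 - D3)) *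
        ((σ2 - D3) ^ 2 - (√((σ2 - D1) * (σ2 - D2)) - √((D1 - D3) * (D2 - D3))) ^ 2) := by
  have ha : 0 < σ2 - D1 := by linarith
  have hb : 0 < σ2 - D2 := by linarith
  have hc : 0 < σ2 - D3 := by linarith
  set k := σ2 ^ 2 / ((σ2 - D1) * (σ2 - D2) * (σ2 - D3)) with hk
  have hs1 : testChannelVariance σ2 D1 - testChannelVariance σ2 D3 =
      k * ((D1 - D3) * (σ2 - D2)) := by
    rw [testChannelVariance_sub_testChannelVariance ha.ne' hc.ne', hk]
    field_simp
  have hs2 : testChannelVariance σ2 D2 - testChannelVariance σ2 D3 =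
      k * ((D2 - D3) * (σ2 - D1)) := by
    rw [testChannelVariance_sub_testChannelVariance hb.ne' hc.ne', hk]
    field_simp
  have hu : 0 ≤ D1 - D3 := sub_nonneg.2 hD3D1
  have hv : 0 ≤ D2 - D3 := sub_nonneg.2 hD3D2
  rw [hs1, hs2, sq_sub_sq_sqrt_sub_sqrt ha.le hb.le hu hv (by ring) (by ring)]
  exact sq_sqrt_mul_add_sqrt_mul (by positivity) (mul_nonneg hu hb.le) (mul_nonneg hv ha.le)

theorem gaussian_vertex_V1_rates_general
    (σ2 D1 D2 D3 s0 s1 s2 ψ : ℝ)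
    (hD3pos : 0 < D3) (hD3leD1 : D3 ≤ D1) (hD1 : D1 < σ2)
    (hD3leD2 : D3 ≤ D2) (hD2 : D2 < σ2)
    (hs0 : s0 = D3 * σ2 / (σ2 - D3))
    (hs1 : s1 = D1 * σ2 / (σ2 - D1) - s0)
    (hs2 : s2 = D2 * σ2 / (σ2 - D2) - s0)
    (hψ : ψ = (σ2 - D3) ^ 2 /
      ((σ2 - D3) ^ 2 -
        (Real.sqrt ((σ2 - D1) * (σ2 - D2)) - Real.sqrt ((D1 - D3) * (D2 - D3))) ^ 2))
    (hmax : D3 < max D1 D2) :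
    (σ2 + s0 + s1) / (s0 + s1) = σ2 / D1 ∧
    (σ2 + s0 + s2) * (s0 + s1) / (s0 * (Real.sqrt s1 + Real.sqrt s2) ^ 2)
      = (D1 / D3) * ψ ∧
    (1 / 2) * Real.log ((σ2 + s0 + s1) / (s0 + s1)) = (1 / 2) * Real.log (σ2 / D1) ∧
    (1 / 2) * Real.log
        ((σ2 + s0 + s2) * (s0 + s1) / (s0 * (Real.sqrt s1 + Real.sqrt s2) ^ 2))
      = (1 / 2) * Real.log (D1 / D3) + (1 / 2) * Real.log ψ := by
  have ha : 0 < σ2 - D1 := by linarith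
  have hb : 0 < σ2 - D2 := by linarith
  have hc : 0 < σ2 - D3 := by linarith
  have hσ : σ2 ≠ 0 := (show 0 < σ2 by linarith).ne'
  have hX : 0 < (σ2 - D3) ^ 2 - (√((σ2 - D1) * (σ2 - D2)) - √((D1 - D3) * (D2 - D3))) ^ 2 :=
    sq_sub_sq_sqrt_sub_sqrt_pos ha hb (by linarith) (by linarith)
      ((lt_max_iff.mp hmax).imp sub_pos.2 sub_pos.2) (by ring) (by ring)
  have hsqrt := sq_sqrt_testChannelVariance_sub_add_sqrt hD3leD1 hD1 hD3leD2 hD2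
  change s1 = testChannelVariance σ2 D1 - s0 at hs1
  change s2 = testChannelVariance σ2 D2 - s0 at hs2
  change s0 = testChannelVariance σ2 D3 at hs0
  rw [← hs0, ← hs1, ← hs2] at hsqrt
  have hS1 : s0 + s1 = testChannelVariance σ2 D1 := by rw [hs1, add_sub_cancel]
  have hS2 : s0 + s2 = testChannelVariance σ2 D2 := by rw [hs2, add_sub_cancel]
  have hR1 : (σ2 + s0 + s1) / (s0 + s1) = σ2 / D1 := by
    rw [add_assoc, hS1, add_testChannelVariance_div_testChannelVariance hσ ha.ne']
  have hR2 : (σ2 + s0 + s2) * (s0 + s1) / (s0 * (√s1 + √s2) ^ 2) = D1 / D3 * ψ := by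
    rw [add_assoc, hS2, hS1, add_testChannelVariance hb.ne', hsqrt, hs0, hψ]
    unfold testChannelVariance
    field_simp
  refine ⟨hR1, hR2, by rw [hR1], ?_⟩
  have hψ_pos : 0 < ψ := hψ ▸ div_pos (by positivity) hX
  rw [hR2, log_mul (div_pos (by linarith) hD3pos).ne' hψ_pos.ne']
  ring

/-- The vertex `V1` of the Gaussian rate region satisfies
`R1(V1) = (1/2)log(σ²/D1)` and `R2(V1) = (1/2)log(D1/D3) + (1/2)log ψ(D1,D2,D3)`. -/
theorem gaussian_vertex_V1_rates
    (σ2 D1 D2 D3 s0 s1 s2 ψ : ℝ)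
    (hσ : 0 < σ2)
    (hD3pos : 0 < D3) (hD3leD1 : D3 ≤ D1) (hD1 : D1 < σ2)
    (hD3leD2 : D3 ≤ D2) (hD2 : D2 < σ2)
    (hs0 : s0 = D3 * σ2 / (σ2 - D3))
    (hs1 : s1 = D1 * σ2 / (σ2 - D1) - s0)
    (hs2 : s2 = D2 * σ2 / (σ2 - D2) - s0)
    (hψ : ψ = (σ2 - D3) ^ 2 /
      ((σ2 - D3) ^ 2 -
        (Real.sqrt ((σ2 - D1) * (σ2 - D2)) - Real.sqrt ((D1 - D3) * (D2 - D3))) ^ 2))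
    (hmax : D3 < max D1 D2)
    (hlow : D1 + D2 - σ2 ≤ D3)
    (hup : D3 ≤ (1 / D1 + 1 / D2 - 1 / σ2)⁻¹) :
    (σ2 + s0 + s1) / (s0 + s1) = σ2 / D1 ∧
    (σ2 + s0 + s2) * (s0 + s1) / (s0 * (Real.sqrt s1 + Real.sqrt s2) ^ 2)
      = (D1 / D3) * ψ ∧
    (1 / 2) * Real.log ((σ2 + s0 + s1) / (s0 + s1)) = (1 / 2) * Real.log (σ2 / D1) ∧
    (1 / 2) * Real.log
        ((σ2 + s0 + s2) * (s0 + s1) / (s0 * (Real.sqrt s1 + Real.sqrt s2) ^ 2))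
      = (1 / 2) * Real.log (D1 / D3) + (1 / 2) * Real.log ψ :=
  gaussian_vertex_V1_rates_general σ2 D1 D2 D3 s0 s1 s2 ψ hD3pos hD3leD1 hD1 hD3leD2 hD2 hs0 hs1 hs2
    hψ hmax
end

section
/- Assume additionally D3 ≤ (1/D1 + 1/D2 − 1/σ²)^{−1}. Then s0² ≤ s1·s2, with equality if and only if D3 = (1/D1 + 1/D2 − 1/σ²)^{−1}. Equivalently, the correlation of the two quantization errors, E[(U1−X)(U2−X)] = s0 − σT1·σT2, is nonpositive and vanishes exactly when D3 = (1/D1 + 1/D2 − 1/σ²)^{−1}. -/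
/-- The correlation of the two side quantization errors,
`E[(U1−X)(U2−X)] = s0 − σT1·σT2`, is nonpositive and vanishes exactly when
`D3 = (1/D1 + 1/D2 − 1/σ²)⁻¹`. -/
theorem quantization_error_correlation_nonpos
    (σ2 D1 D2 D3 s0 s1 s2 : ℝ)
    (hσ : 0 < σ2)
    (hD3pos : 0 < D3) (hD3leD1 : D3 ≤ D1) (hD1 : D1 < σ2)
    (hD3leD2 : D3 ≤ D2) (hD2 : D2 < σ2)
    (hs0 : s0 = D3 * σ2 / (σ2 - D3))
    (hs1 : s1 = D1 * σ2 / (σ2 - D1) - s0)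
    (hs2 : s2 = D2 * σ2 / (σ2 - D2) - s0)
    (hup : D3 ≤ (1 / D1 + 1 / D2 - 1 / σ2)⁻¹) :
    s0 ^ 2 ≤ s1 * s2 ∧
    (s0 ^ 2 = s1 * s2 ↔ D3 = (1 / D1 + 1 / D2 - 1 / σ2)⁻¹) ∧
    s0 - Real.sqrt s1 * Real.sqrt s2 ≤ 0 ∧
    (s0 - Real.sqrt s1 * Real.sqrt s2 = 0 ↔ D3 = (1 / D1 + 1 / D2 - 1 / σ2)⁻¹) := by
  have hD1pos : 0 < D1 := lt_of_lt_of_le hD3pos hD3leD1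
  have hD2pos : 0 < D2 := lt_of_lt_of_le hD3pos hD3leD2
  have hD3lt : D3 < σ2 := lt_of_le_of_lt hD3leD1 hD1
  have h1 : 0 < σ2 - D1 := by linarith
  have h2 : 0 < σ2 - D2 := by linarith
  have h3 : 0 < σ2 - D3 := by linarith
  set E : ℝ := 1 / D1 + 1 / D2 - 1 / σ2 with hE
  have hEpos : 0 < E := by
    have h1' : 1 / σ2 < 1 / D1 := one_div_lt_one_div_of_lt hD1pos hD1
    have h2' : 0 < 1 / D2 := by positivity
    rw [hE]; linarith
  -- key identity
  have hK : 0 < D3 * σ2 / (σ2 - D3) * (D1 * σ2 / (σ2 - D1)) * (D2 * σ2 / (σ2 - D2)) / D3 := by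
    positivity
  have key : s1 * s2 - s0 ^ 2 =
      (D3 * σ2 / (σ2 - D3) * (D1 * σ2 / (σ2 - D1)) * (D2 * σ2 / (σ2 - D2)) / D3)
        * (1 - D3 * E) := by
    subst hs0 hs1 hs2
    rw [hE]
    field_simp
    ring
  have hmul : D3 * E ≤ 1 := by
    have := mul_le_mul_of_nonneg_right hup hEpos.le
    rwa [inv_mul_cancel₀ hEpos.ne'] at this
  have hle : s0 ^ 2 ≤ s1 * s2 := by
    have h0 : 0 ≤ (D3 * σ2 / (σ2 - D3) * (D1 * σ2 / (σ2 - D1)) * (D2 * σ2 / (σ2 - D2)) / D3)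
        * (1 - D3 * E) := mul_nonneg hK.le (by linarith)
    linarith [key]
  have hiff : s0 ^ 2 = s1 * s2 ↔ D3 = E⁻¹ := by
    constructor
    · intro h
      have h0 : (D3 * σ2 / (σ2 - D3) * (D1 * σ2 / (σ2 - D1)) * (D2 * σ2 / (σ2 - D2)) / D3)
          * (1 - D3 * E) = 0 := by rw [← key, h]; ring
      have h1' : 1 - D3 * E = 0 := by
        rcases mul_eq_zero.1 h0 with h | h
        · exact absurd h hK.ne'
        · exact h
      have : D3 * E = 1 := by linarith
      rw [eq_inv_of_mul_eq_one_left (by linarith [this] : E * D3 = 1)]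
      exact (inv_inv D3).symm
    · intro h
      have hmul1 : D3 * E = 1 := by
        rw [h]; exact inv_mul_cancel₀ hEpos.ne'
      have h0 : s1 * s2 - s0 ^ 2 = 0 := by
        rw [key, show (1 : ℝ) - D3 * E = 0 by linarith, mul_zero]
      linarith
  -- nonnegativity of s0, s1, s2
  have hs0nn : 0 ≤ s0 := by rw [hs0]; positivity
  have hs1nn : 0 ≤ s1 := by
    rw [hs1, hs0, sub_nonneg, div_le_div_iff₀ h3 h1]
    nlinarith [mul_nonneg (sub_nonneg.2 hD3leD1) (mul_pos hσ hσ).le]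
  have hs2nn : 0 ≤ s2 := by
    rw [hs2, hs0, sub_nonneg, div_le_div_iff₀ h3 h2]
    nlinarith [mul_nonneg (sub_nonneg.2 hD3leD2) (mul_pos hσ hσ).le]
  have hsqrt : Real.sqrt s1 * Real.sqrt s2 = Real.sqrt (s1 * s2) :=
    (Real.sqrt_mul hs1nn s2).symm
  have hs0sq : Real.sqrt (s0 ^ 2) = s0 := Real.sqrt_sq hs0nn
  have hsle : s0 ≤ Real.sqrt (s1 * s2) := by
    rw [← hs0sq]; exact Real.sqrt_le_sqrt hle
  refine ⟨hle, hiff, by rw [hsqrt]; linarith, ?_⟩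
  rw [hsqrt, ← hiff, sub_eq_zero]
  constructor
  · intro h
    have := congrArg (· ^ 2) h
    simp only [Real.sq_sqrt (le_trans (by positivity) hle)] at this
    exact this
  · intro h
    rw [← h, hs0sq]
end

section
/- Assume additionally D1 + D2 > σ² and D3 = D1 + D2 − σ². Then (σ² + s0)² = s1·s2, i.e. σ² + s0 − σT1·σT2 = 0. Consequently E[U1·U2] = σ² + s0 − σT1·σT2 = 0: in the no-excess-sum-rate case the two descriptions U1 and U2 are uncorrelated. -/
/-!
Write `a = σ² − D1`, `b = σ² − D2`. In the no-excess case `σ² − D3 = a + b`, and the test-channel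
variances become `σ² + s0 = σ⁴/(a + b)`, `s1 = σ⁴ b/(a(a + b))`, `s2 = σ⁴ a/(b(a + b))`, so that
`s1 s2 = (σ² + s0)²` with all three quantities nonnegative. For the correlation, `S = X + T0` is
centred and independent of `T1` and of `T2`, hence
`E[U1 U2] = E[S²] + E[T1 T2] = σ² + s0 − σT1 σT2 = 0`.
-/

open MeasureTheory ProbabilityTheory

lemma Real.eq_sqrt_mul_sqrt_of_sq_eq_mul {a b c : ℝ} (ha : 0 ≤ a) (hb : 0 ≤ b)
    (h : a ^ 2 = b * c) : a = √b * √c := by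
  rw [← Real.sqrt_mul hb, ← h, Real.sqrt_sq ha]

section NoExcessSumRate

variable {σ2 D1 D2 D3 : ℝ}

lemma add_mul_div_sub_eq (h : σ2 - D3 ≠ 0) :
    σ2 + D3 * σ2 / (σ2 - D3) = σ2 ^ 2 / (σ2 - D3) := by
  field_simp
  ring

lemma mul_div_sub_sub_mul_div_sub_of_eq_add_sub (hD1 : D1 < σ2) (hD2 : D2 < σ2)
    (hD3 : D3 = D1 + D2 - σ2) :
    D1 * σ2 / (σ2 - D1) - D3 * σ2 / (σ2 - D3) =
      σ2 ^ 2 * (σ2 - D2) / ((σ2 - D1) * (σ2 - D3)) := by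
  have h1 : σ2 - D1 ≠ 0 := by linarith
  have h3 : σ2 - D3 ≠ 0 := by linarith
  field_simp
  rw [hD3]
  ring

lemma sq_add_mul_div_sub_eq_of_eq_add_sub (hD1 : D1 < σ2) (hD2 : D2 < σ2)
    (hD3 : D3 = D1 + D2 - σ2) :
    (σ2 + D3 * σ2 / (σ2 - D3)) ^ 2 =
      (D1 * σ2 / (σ2 - D1) - D3 * σ2 / (σ2 - D3)) *
        (D2 * σ2 / (σ2 - D2) - D3 * σ2 / (σ2 - D3)) := by
  have h1 : σ2 - D1 ≠ 0 := by linarith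
  have h2 : σ2 - D2 ≠ 0 := by linarith
  have h3 : σ2 - D3 ≠ 0 := by linarith
  rw [add_mul_div_sub_eq h3, mul_div_sub_sub_mul_div_sub_of_eq_add_sub hD1 hD2 hD3,
    mul_div_sub_sub_mul_div_sub_of_eq_add_sub hD2 hD1 (by linarith)]
  field_simp

lemma add_mul_div_sub_eq_sqrt_mul_sqrt_of_eq_add_sub (hD1 : D1 < σ2) (hD2 : D2 < σ2)
    (hD3 : D3 = D1 + D2 - σ2) :
    σ2 + D3 * σ2 / (σ2 - D3) =
      √(D1 * σ2 / (σ2 - D1) - D3 * σ2 / (σ2 - D3)) *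
        √(D2 * σ2 / (σ2 - D2) - D3 * σ2 / (σ2 - D3)) := by
  have hsum_nonneg : 0 ≤ σ2 + D3 * σ2 / (σ2 - D3) := by
    rw [add_mul_div_sub_eq (by linarith)]
    exact div_nonneg (sq_nonneg σ2) (by linarith)
  have hs1_nonneg : 0 ≤ D1 * σ2 / (σ2 - D1) - D3 * σ2 / (σ2 - D3) := by
    rw [mul_div_sub_sub_mul_div_sub_of_eq_add_sub hD1 hD2 hD3]
    exact div_nonneg (mul_nonneg (sq_nonneg σ2) (by linarith))
      (mul_nonneg (by linarith) (by linarith))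
  exact Real.eq_sqrt_mul_sqrt_of_sq_eq_mul hsum_nonneg hs1_nonneg
    (sq_add_mul_div_sub_eq_of_eq_add_sub hD1 hD2 hD3)

end NoExcessSumRate

section Moments

variable {Ω : Type*} [MeasurableSpace Ω] {μ : Measure Ω}

lemma integral_sq_add_of_indepFun [IsFiniteMeasure μ] {X Y : Ω → ℝ} (hX : MemLp X 2 μ)
    (hY : MemLp Y 2 μ) (hXY : IndepFun X Y μ) (hX0 : ∫ ω, X ω ∂μ = 0)
    (hY0 : ∫ ω, Y ω ∂μ = 0) :
    ∫ ω, (X ω + Y ω) ^ 2 ∂μ = ∫ ω, X ω ^ 2 ∂μ + ∫ ω, Y ω ^ 2 ∂μ := by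
  have hXY0 : ∫ ω, (X + Y) ω ∂μ = 0 := by
    rw [Pi.add_def, integral_add (hX.integrable one_le_two) (hY.integrable one_le_two), hX0,
      hY0, add_zero]
  have hvar := hXY.variance_add hX hY
  rwa [variance_of_integral_eq_zero (hX.add hY).aestronglyMeasurable.aemeasurable hXY0,
    variance_of_integral_eq_zero hX.aestronglyMeasurable.aemeasurable hX0,
    variance_of_integral_eq_zero hY.aestronglyMeasurable.aemeasurable hY0] at hvar

lemma integral_mul_eq_zero_of_indepFun {X Y : Ω → ℝ} (hXY : IndepFun X Y μ)
    (hX : AEStronglyMeasurable X μ) (hY : AEStronglyMeasurable Y μ) (hX0 : ∫ ω, X ω ∂μ = 0) :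
    ∫ ω, X ω * Y ω ∂μ = 0 := by
  rw [hXY.integral_fun_mul_eq_mul_integral hX hY, hX0, zero_mul]

lemma integral_add_mul_add {S T₁ T₂ : Ω → ℝ} (hS : MemLp S 2 μ) (hT₁ : MemLp T₁ 2 μ)
    (hT₂ : MemLp T₂ 2 μ) :
    ∫ ω, (S ω + T₁ ω) * (S ω + T₂ ω) ∂μ =
      ∫ ω, S ω ^ 2 ∂μ + ∫ ω, S ω * T₁ ω ∂μ + ∫ ω, S ω * T₂ ω ∂μ + ∫ ω, T₁ ω * T₂ ω ∂μ := by
  have hSS : Integrable (fun ω => S ω ^ 2) μ := hS.integrable_sq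
  have hST₁ : Integrable (fun ω => S ω * T₁ ω) μ := hS.integrable_mul hT₁
  have hST₂ : Integrable (fun ω => S ω * T₂ ω) μ := hS.integrable_mul hT₂
  have hT₁T₂ : Integrable (fun ω => T₁ ω * T₂ ω) μ := hT₁.integrable_mul hT₂
  simp_rw [show ∀ ω, (S ω + T₁ ω) * (S ω + T₂ ω)
      = S ω ^ 2 + S ω * T₁ ω + S ω * T₂ ω + T₁ ω * T₂ ω from fun ω => by ring]
  rw [integral_add (by exact (hSS.add hST₁).add hST₂) hT₁T₂,
    integral_add (by exact hSS.add hST₁) hST₂, integral_add hSS hST₁]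

lemma integral_add_mul_add_of_indepFun {S T₁ T₂ : Ω → ℝ} (hS : MemLp S 2 μ)
    (hT₁ : MemLp T₁ 2 μ) (hT₂ : MemLp T₂ 2 μ) (hS0 : ∫ ω, S ω ∂μ = 0)
    (hST₁ : IndepFun S T₁ μ) (hST₂ : IndepFun S T₂ μ) :
    ∫ ω, (S ω + T₁ ω) * (S ω + T₂ ω) ∂μ = ∫ ω, S ω ^ 2 ∂μ + ∫ ω, T₁ ω * T₂ ω ∂μ := by
  rw [integral_add_mul_add hS hT₁ hT₂,
    integral_mul_eq_zero_of_indepFun hST₁ hS.1 hT₁.1 hS0,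
    integral_mul_eq_zero_of_indepFun hST₂ hS.1 hT₂.1 hS0, add_zero, add_zero]

end Moments

theorem no_excess_sum_rate_descriptions_uncorrelated_general
    {Ω : Type*} [MeasurableSpace Ω] (μ : Measure Ω) [IsProbabilityMeasure μ]
    (σ2 D1 D2 D3 s0 s1 s2 : ℝ)
    (hD1 : D1 < σ2)
    (hD2 : D2 < σ2)
    (hs0 : s0 = D3 * σ2 / (σ2 - D3))
    (hs1 : s1 = D1 * σ2 / (σ2 - D1) - s0)
    (hs2 : s2 = D2 * σ2 / (σ2 - D2) - s0)
    (hD3 : D3 = D1 + D2 - σ2)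
    (X T0 T1 T2 : Ω → ℝ)
    (hX2 : MemLp X 2 μ) (hT02 : MemLp T0 2 μ) (hT12 : MemLp T1 2 μ) (hT22 : MemLp T2 2 μ)
    (hXmean : ∫ ω, X ω ∂μ = 0) (hT0mean : ∫ ω, T0 ω ∂μ = 0)
    (hXvar : ∫ ω, (X ω) ^ 2 ∂μ = σ2)
    (hT0var : ∫ ω, (T0 ω) ^ 2 ∂μ = s0)
    (hT1T2 : ∫ ω, T1 ω * T2 ω ∂μ = -(Real.sqrt s1 * Real.sqrt s2))
    -- `X`, `T0` and the pair `(T1, T2)` are mutually independent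
    (hIndep1 : IndepFun X T0 μ)
    (hIndep2 : IndepFun (fun ω => (X ω, T0 ω)) (fun ω => (T1 ω, T2 ω)) μ)
    (U1 U2 : Ω → ℝ)
    (hU1 : U1 = fun ω => X ω + T0 ω + T1 ω)
    (hU2 : U2 = fun ω => X ω + T0 ω + T2 ω) :
    (σ2 + s0) ^ 2 = s1 * s2 ∧
    σ2 + s0 - Real.sqrt s1 * Real.sqrt s2 = 0 ∧
    ∫ ω, U1 ω * U2 ω ∂μ = 0 := by
  have hsq : (σ2 + s0) ^ 2 = s1 * s2 := by
    rw [hs1, hs2, hs0]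
    exact sq_add_mul_div_sub_eq_of_eq_add_sub hD1 hD2 hD3
  have hgap : σ2 + s0 - √s1 * √s2 = 0 := by
    rw [hs1, hs2, hs0]
    exact sub_eq_zero.2 (add_mul_div_sub_eq_sqrt_mul_sqrt_of_eq_add_sub hD1 hD2 hD3)
  refine ⟨hsq, hgap, ?_⟩
  have hS0 : ∫ ω, (X ω + T0 ω) ∂μ = 0 := by
    rw [integral_add (hX2.integrable one_le_two) (hT02.integrable one_le_two), hXmean, hT0mean,
      add_zero]
  have hST1 : IndepFun (fun ω => X ω + T0 ω) T1 μ :=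
    hIndep2.comp (measurable_fst.add measurable_snd) measurable_fst
  have hST2 : IndepFun (fun ω => X ω + T0 ω) T2 μ :=
    hIndep2.comp (measurable_fst.add measurable_snd) measurable_snd
  subst hU1 hU2
  beta_reduce
  rw [integral_add_mul_add_of_indepFun (S := fun ω => X ω + T0 ω) (hX2.add hT02) hT12 hT22 hS0
      hST1 hST2,
    integral_sq_add_of_indepFun hX2 hT02 hIndep1 hXmean hT0mean, hXvar, hT0var, hT1T2]
  linarith

/-- No excess sum-rate case `D3 = D1 + D2 − σ²`: then `(σ² + s0)² = s1·s2`, i.e.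
`σ² + s0 − σT1·σT2 = 0`, and consequently the two descriptions are uncorrelated:
`E[U1·U2] = 0`. -/
theorem no_excess_sum_rate_descriptions_uncorrelated
    {Ω : Type*} [MeasurableSpace Ω] (μ : Measure Ω) [IsProbabilityMeasure μ]
    (σ2 D1 D2 D3 s0 s1 s2 : ℝ)
    (hσ : 0 < σ2)
    (hD3pos : 0 < D3) (hD3leD1 : D3 ≤ D1) (hD1 : D1 < σ2)
    (hD3leD2 : D3 ≤ D2) (hD2 : D2 < σ2)
    (hs0 : s0 = D3 * σ2 / (σ2 - D3))
    (hs1 : s1 = D1 * σ2 / (σ2 - D1) - s0)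
    (hs2 : s2 = D2 * σ2 / (σ2 - D2) - s0)
    (hsum : σ2 < D1 + D2)
    (hD3 : D3 = D1 + D2 - σ2)
    (X T0 T1 T2 : Ω → ℝ)
    (hX2 : MemLp X 2 μ) (hT02 : MemLp T0 2 μ) (hT12 : MemLp T1 2 μ) (hT22 : MemLp T2 2 μ)
    (hXmean : ∫ ω, X ω ∂μ = 0) (hT0mean : ∫ ω, T0 ω ∂μ = 0)
    (hT1mean : ∫ ω, T1 ω ∂μ = 0) (hT2mean : ∫ ω, T2 ω ∂μ = 0)
    (hXvar : ∫ ω, (X ω) ^ 2 ∂μ = σ2)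
    (hT0var : ∫ ω, (T0 ω) ^ 2 ∂μ = s0)
    (hT1var : ∫ ω, (T1 ω) ^ 2 ∂μ = s1)
    (hT2var : ∫ ω, (T2 ω) ^ 2 ∂μ = s2)
    (hT1T2 : ∫ ω, T1 ω * T2 ω ∂μ = -(Real.sqrt s1 * Real.sqrt s2))
    -- `X`, `T0` and the pair `(T1, T2)` are mutually independent
    (hIndep1 : IndepFun X T0 μ)
    (hIndep2 : IndepFun (fun ω => (X ω, T0 ω)) (fun ω => (T1 ω, T2 ω)) μ)
    (U1 U2 : Ω → ℝ)
    (hU1 : U1 = fun ω => X ω + T0 ω + T1 ω)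
    (hU2 : U2 = fun ω => X ω + T0 ω + T2 ω) :
    (σ2 + s0) ^ 2 = s1 * s2 ∧
    σ2 + s0 - Real.sqrt s1 * Real.sqrt s2 = 0 ∧
    ∫ ω, U1 ω * U2 ω ∂μ = 0 :=
  no_excess_sum_rate_descriptions_uncorrelated_general μ σ2 D1 D2 D3 s0 s1 s2 hD1 hD2 hs0 hs1 hs2
    hD3 X T0 T1 T2 hX2 hT02 hT12 hT22 hXmean hT0mean hXvar hT0var hT1T2 hIndep1 hIndep2 U1 U2 hU1
    hU2
end

section
/- Assume additionally D3 < max(D1, D2), so that σT1 + σT2 > 0, and define for s3 ≥ 0 the function f(s3) = (σ² + s0 + s1)·(s0 + s2 + s3) / (s0·(σT1 + σT2)² + s3·(s0 + s1)) (so that the first-description rate under quantization splitting is R^G_1 = (1/2)·log f(s3)). Then: (i) f(0) = (σ² + s0 + s1)·(s0 + s2)/(s0·(σT1 + σT2)²); (ii) f(s3) → (σ² + s0 + s1)/(s0 + s1) as s3 → ∞; and (iii) if s0 ≠ σT1·σT2 then f is strictly decreasing on [0, ∞), while if s0 = σT1·σT2 then f is constant. -/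
open Filter

set_option maxHeartbeats 800000

/-- Properties of `f(s3) = 2^{2·R₁^G(s3)}`, the (exponentiated) first-description rate
under quantization splitting, as a function of the splitting-noise variance `s3`:
its value at `0`, its limit as `s3 → ∞`, strict decrease when `s0 ≠ σT1·σT2`, and
constancy when `s0 = σT1·σT2`. -/
theorem splitting_rate_function_properties
    (σ2 D1 D2 D3 s0 s1 s2 : ℝ)
    (hσ : 0 < σ2)
    (hD3pos : 0 < D3) (hD3leD1 : D3 ≤ D1) (hD1 : D1 < σ2)
    (hD3leD2 : D3 ≤ D2) (hD2 : D2 < σ2)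
    (hs0 : s0 = D3 * σ2 / (σ2 - D3))
    (hs1 : s1 = D1 * σ2 / (σ2 - D1) - s0)
    (hs2 : s2 = D2 * σ2 / (σ2 - D2) - s0)
    (hmax : D3 < max D1 D2)
    (f : ℝ → ℝ)
    (hf : ∀ s3, f s3 = (σ2 + s0 + s1) * (s0 + s2 + s3) /
      (s0 * (Real.sqrt s1 + Real.sqrt s2) ^ 2 + s3 * (s0 + s1))) :
    0 < Real.sqrt s1 + Real.sqrt s2 ∧
    f 0 = (σ2 + s0 + s1) * (s0 + s2) / (s0 * (Real.sqrt s1 + Real.sqrt s2) ^ 2) ∧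
    Tendsto f atTop (nhds ((σ2 + s0 + s1) / (s0 + s1))) ∧
    (s0 ≠ Real.sqrt s1 * Real.sqrt s2 → StrictAntiOn f (Set.Ici 0)) ∧
    (s0 = Real.sqrt s1 * Real.sqrt s2 →
      ∀ x ∈ Set.Ici (0 : ℝ), ∀ y ∈ Set.Ici (0 : ℝ), f x = f y) := by
  have hD3σ : 0 < σ2 - D3 := by linarith
  have hD1σ : 0 < σ2 - D1 := by linarith
  have hD2σ : 0 < σ2 - D2 := by linarith
  have hs0pos : 0 < s0 := by
    rw [hs0]; exact div_pos (by positivity) hD3σ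
  have hs1nn : 0 ≤ s1 := by
    rw [hs1, hs0, sub_nonneg, div_le_div_iff₀ hD3σ hD1σ]
    nlinarith [mul_nonneg (mul_nonneg hσ.le hσ.le) (sub_nonneg.2 hD3leD1)]
  have hs2nn : 0 ≤ s2 := by
    rw [hs2, hs0, sub_nonneg, div_le_div_iff₀ hD3σ hD2σ]
    nlinarith [mul_nonneg (mul_nonneg hσ.le hσ.le) (sub_nonneg.2 hD3leD2)]
  set a := Real.sqrt s1 with ha'
  set b := Real.sqrt s2 with hb'
  have ha2 : a ^ 2 = s1 := Real.sq_sqrt hs1nn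
  have hb2 : b ^ 2 = s2 := Real.sq_sqrt hs2nn
  have hann : 0 ≤ a := Real.sqrt_nonneg _
  have hbnn : 0 ≤ b := Real.sqrt_nonneg _
  have hab : 0 < a + b := by
    rcases lt_max_iff.1 hmax with h | h
    · have : 0 < s1 := by
        rw [hs1, hs0, sub_pos, div_lt_div_iff₀ hD3σ hD1σ]
        nlinarith [mul_pos (mul_pos hσ hσ) (sub_pos.2 h)]
      have : 0 < a := Real.sqrt_pos.2 this
      linarith
    · have : 0 < s2 := by
        rw [hs2, hs0, sub_pos, div_lt_div_iff₀ hD3σ hD2σ]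
        nlinarith [mul_pos (mul_pos hσ hσ) (sub_pos.2 h)]
      have : 0 < b := Real.sqrt_pos.2 this
      linarith
  have hA : 0 < σ2 + s0 + s1 := by linarith
  have hE : 0 < s0 + s1 := by linarith
  have hden : ∀ s3 : ℝ, 0 ≤ s3 → 0 < s0 * (a + b) ^ 2 + s3 * (s0 + s1) := by
    intro s3 h3
    have h1 : 0 < s0 * (a + b) ^ 2 := by positivity
    nlinarith [mul_nonneg h3 hE.le]
  refine ⟨hab, ?_, ?_, ?_, ?_⟩
  · rw [hf]; norm_num
  · -- limit
    have h1 : Tendsto (fun x : ℝ => ((σ2 + s0 + s1) * (s0 + s2) * x⁻¹ + (σ2 + s0 + s1)) /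
        (s0 * (a + b) ^ 2 * x⁻¹ + (s0 + s1))) atTop (nhds ((σ2 + s0 + s1) / (s0 + s1))) := by
      have hnum : Tendsto (fun x : ℝ => (σ2 + s0 + s1) * (s0 + s2) * x⁻¹ + (σ2 + s0 + s1))
          atTop (nhds (σ2 + s0 + s1)) := by
        have := (tendsto_inv_atTop_zero.const_mul ((σ2 + s0 + s1) * (s0 + s2))).add_const
          (σ2 + s0 + s1)
        simpa using this
      have hde : Tendsto (fun x : ℝ => s0 * (a + b) ^ 2 * x⁻¹ + (s0 + s1))
          atTop (nhds (s0 + s1)) := by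
        have := (tendsto_inv_atTop_zero.const_mul (s0 * (a + b) ^ 2)).add_const (s0 + s1)
        simpa using this
      exact hnum.div hde hE.ne'
    refine h1.congr' ?_
    filter_upwards [eventually_gt_atTop 0] with x hx
    rw [hf x, div_eq_div_iff (by positivity) (hden x hx.le).ne']
    field_simp
  · intro hne x hx y hy hxy
    have hx0 : (0:ℝ) ≤ x := hx
    have hy0 : (0:ℝ) ≤ y := hy
    rw [hf x, hf y, div_lt_div_iff₀ (hden y hy0) (hden x hx0)]
    have hkey : (s0 + s2) * (s0 + s1) - s0 * (a + b) ^ 2 = (s0 - a * b) ^ 2 := by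
      rw [← ha2, ← hb2]; ring
    have hsq : 0 < (s0 - a * b) ^ 2 := by
      have : s0 - a * b ≠ 0 := sub_ne_zero.2 hne
      positivity
    have hid : (σ2 + s0 + s1) * (s0 + s2 + x) * (s0 * (a + b) ^ 2 + y * (s0 + s1)) -
        (σ2 + s0 + s1) * (s0 + s2 + y) * (s0 * (a + b) ^ 2 + x * (s0 + s1)) =
        (σ2 + s0 + s1) * (y - x) * (s0 - a * b) ^ 2 := by
      linear_combination ((σ2 + s0 + s1) * (y - x)) * hkey
    linarith [hid, mul_pos (mul_pos hA (sub_pos.2 hxy)) hsq]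
  · intro heq x hx y hy
    have hx0 : (0:ℝ) ≤ x := hx
    have hy0 : (0:ℝ) ≤ y := hy
    rw [hf x, hf y, div_eq_div_iff (hden x hx0).ne' (hden y hy0).ne']
    have hC : s0 * (a + b) ^ 2 = (s0 + s2) * (s0 + s1) := by
      rw [← ha2, ← hb2, heq]; ring
    linear_combination ((σ2 + s0 + s1) * (x - y)) * hC
end

section
/- Assume additionally D3 < max(D1, D2) and s0 ≠ σT1·σT2, and let f(s3) = (σ² + s0 + s1)·(s0 + s2 + s3) / (s0·(σT1 + σT2)² + s3·(s0 + s1)). Then for every real ρ with (σ² + s0 + s1)/(s0 + s1) < ρ ≤ f(0), the value s3* = (s0·(σT1 + σT2)²·ρ − (s0 + s2)·(σ² + s0 + s1)) / ((σ² + s0 + s1) − ρ·(s0 + s1)) satisfies s3* ≥ 0 and f(s3*) = ρ, and s3* is the unique nonnegative solution of f(s3) = ρ. Hence every rate pair on the dominant face of the Gaussian rate region is achieved by some choice of the splitting-noise variance s3 ∈ [0, ∞). -/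
set_option maxHeartbeats 1000000


/-- Every rate pair on the dominant face of the Gaussian rate region is achieved by a
unique choice of splitting-noise variance: for every `ρ` with
`(σ²+s0+s1)/(s0+s1) < ρ ≤ f(0)`, the explicit value `s3*` is nonnegative, satisfies
`f(s3*) = ρ`, and is the unique nonnegative solution of `f(s3) = ρ`. -/
theorem splitting_noise_variance_exists_unique
    (σ2 D1 D2 D3 s0 s1 s2 : ℝ)
    (hσ : 0 < σ2)
    (hD3pos : 0 < D3) (hD3leD1 : D3 ≤ D1) (hD1 : D1 < σ2)
    (hD3leD2 : D3 ≤ D2) (hD2 : D2 < σ2)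
    (hs0 : s0 = D3 * σ2 / (σ2 - D3))
    (hs1 : s1 = D1 * σ2 / (σ2 - D1) - s0)
    (hs2 : s2 = D2 * σ2 / (σ2 - D2) - s0)
    (hmax : D3 < max D1 D2)
    (hne : s0 ≠ Real.sqrt s1 * Real.sqrt s2)
    (f : ℝ → ℝ)
    (hf : ∀ s3, f s3 = (σ2 + s0 + s1) * (s0 + s2 + s3) /
      (s0 * (Real.sqrt s1 + Real.sqrt s2) ^ 2 + s3 * (s0 + s1)))
    (ρ : ℝ)
    (hρlow : (σ2 + s0 + s1) / (s0 + s1) < ρ)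
    (hρhigh : ρ ≤ f 0)
    (s3star : ℝ)
    (hstar : s3star = (s0 * (Real.sqrt s1 + Real.sqrt s2) ^ 2 * ρ
        - (s0 + s2) * (σ2 + s0 + s1)) / ((σ2 + s0 + s1) - ρ * (s0 + s1))) :
    0 ≤ s3star ∧ f s3star = ρ ∧ ∀ s3, 0 ≤ s3 → f s3 = ρ → s3 = s3star := by
  have hσD1 : 0 < σ2 - D1 := by linarith
  have hσD2 : 0 < σ2 - D2 := by linarith
  have hσD3 : 0 < σ2 - D3 := by linarith
  have hs0pos : 0 < s0 := by rw [hs0]; positivity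
  have hs1nn : 0 ≤ s1 := by
    rw [hs1, hs0, sub_nonneg, div_le_div_iff₀ hσD3 hσD1]
    nlinarith [mul_le_mul_of_nonneg_right hD3leD1 (mul_pos hσ hσ).le]
  have hs2nn : 0 ≤ s2 := by
    rw [hs2, hs0, sub_nonneg, div_le_div_iff₀ hσD3 hσD2]
    nlinarith [mul_le_mul_of_nonneg_right hD3leD2 (mul_pos hσ hσ).le]
  set t1 := Real.sqrt s1 with ht1def
  set t2 := Real.sqrt s2 with ht2def
  have ht1 : t1 ^ 2 = s1 := Real.sq_sqrt hs1nn
  have ht2 : t2 ^ 2 = s2 := Real.sq_sqrt hs2nn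
  have ht1nn : 0 ≤ t1 := Real.sqrt_nonneg _
  have ht2nn : 0 ≤ t2 := Real.sqrt_nonneg _
  have htpos : 0 < t1 + t2 := by
    rcases max_cases D1 D2 with ⟨h, _⟩ | ⟨h, _⟩ <;> rw [h] at hmax
    · have hs1pos : 0 < s1 := by
        rw [hs1, hs0, sub_pos, div_lt_div_iff₀ hσD3 hσD1]
        nlinarith [mul_lt_mul_of_pos_right hmax (mul_pos hσ hσ)]
      have := Real.sqrt_pos.mpr hs1pos
      rw [← ht1def] at this
      linarith
    · have hs2pos : 0 < s2 := by
        rw [hs2, hs0, sub_pos, div_lt_div_iff₀ hσD3 hσD2]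
        nlinarith [mul_lt_mul_of_pos_right hmax (mul_pos hσ hσ)]
      have := Real.sqrt_pos.mpr hs2pos
      rw [← ht2def] at this
      linarith
  have hApos : 0 < σ2 + s0 + s1 := by linarith
  have hCpos : 0 < s0 + s1 := by linarith
  have hEpos : 0 < s0 + s2 := by linarith
  have hBpos : 0 < s0 * (t1 + t2) ^ 2 := by positivity
  have hne' : s0 - t1 * t2 ≠ 0 := sub_ne_zero.mpr hne
  have hBEC : s0 * (t1 + t2) ^ 2 - (s0 + s2) * (s0 + s1) < 0 := by
    have h2 : 0 < (s0 - t1 * t2) ^ 2 := pow_two_pos_of_ne_zero hne'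
    nlinarith
  have hden : σ2 + s0 + s1 - ρ * (s0 + s1) < 0 := by
    rw [div_lt_iff₀ hCpos] at hρlow
    linarith
  have hdnz : (σ2 + s0 + s1) - ρ * (s0 + s1) ≠ 0 := by
    intro h; rw [sub_eq_zero] at h; linarith [hden]
  have hnum : s0 * (t1 + t2) ^ 2 * ρ - (s0 + s2) * (σ2 + s0 + s1) ≤ 0 := by
    have hf0 : f 0 = (σ2 + s0 + s1) * (s0 + s2) / (s0 * (t1 + t2) ^ 2) := by
      rw [hf 0]; ring_nf
    rw [hf0, le_div_iff₀ hBpos] at hρhigh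
    linarith [hρhigh, mul_comm ρ (s0 * (t1 + t2) ^ 2),
      mul_comm (s0 + s2) (σ2 + s0 + s1)]
  have hs3nn : 0 ≤ s3star := by
    rw [hstar]
    exact div_nonneg_iff.mpr (Or.inr ⟨hnum, hden.le⟩)
  -- key linear equation for s3star
  have hs3stareq : s3star * ((σ2 + s0 + s1) - ρ * (s0 + s1)) =
      s0 * (t1 + t2) ^ 2 * ρ - (s0 + s2) * (σ2 + s0 + s1) := by
    rw [hstar, div_mul_cancel₀ _ hdnz]
  have hdenstar : 0 < s0 * (t1 + t2) ^ 2 + s3star * (s0 + s1) := by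
    have heq : s0 * (t1 + t2) ^ 2 + s3star * (s0 + s1) =
        ((σ2 + s0 + s1) * (s0 * (t1 + t2) ^ 2 - (s0 + s2) * (s0 + s1))) /
          ((σ2 + s0 + s1) - ρ * (s0 + s1)) := by
      rw [hstar]; field_simp; ring
    rw [heq]
    exact div_pos_of_neg_of_neg (mul_neg_of_pos_of_neg hApos hBEC) hden
  refine ⟨hs3nn, ?_, ?_⟩
  · rw [hf s3star, div_eq_iff (ne_of_gt hdenstar)]
    nlinarith [hs3stareq]
  · intro s3 hs3nn2 hfs3
    have hd2 : 0 < s0 * (t1 + t2) ^ 2 + s3 * (s0 + s1) := by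
      have := mul_nonneg hs3nn2 (le_of_lt hCpos)
      linarith
    rw [hf s3, div_eq_iff (ne_of_gt hd2)] at hfs3
    have key : (s3 - s3star) * ((σ2 + s0 + s1) - ρ * (s0 + s1)) = 0 := by
      linear_combination hfs3 - hs3stareq
    rcases mul_eq_zero.mp key with h | h
    · linarith [sub_eq_zero.mp h]
    · exact absurd h hdnz
end

section
/- Assume additionally D3 < max(D1, D2), so that σT1 + σT2 > 0. Let α1 = σ²/(σ² + s0 + s1), α2 = σ²/(σ² + s0 + s2), β1 = σ²·σT2/((σT1 + σT2)·(σ² + s0)), and β2 = σ²·σT1/((σT1 + σT2)·(σ² + s0)). Then the side and central reconstruction errors achieve exactly the target distortions: E[(X − α1·U1)²] = D1, E[(X − α2·U2)²] = D2, and E[(X − β1·U1 − β2·U2)²] = D3. -/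
/-!
Each error is the second moment of a linear combination of `X, T0, T1, T2`, so independence
reduces it to the error `σ²t/(σ² + t)` of the linear estimate `σ²/(σ² + t) · (X + N)` of `X`
from an observation with uncorrelated noise `N` of power `t`; and `t = Dσ²/(σ² − D)` is exactly
the noise power for which this error is `D`. For the central estimate, perfect anticorrelation
forces `√s2·T1 + √s1·T2 = 0` almost surely, and `β1, β2` are proportional to `√s2, √s1`, so the
noise `T1, T2` cancels and what remains is the linear estimate of `X` from `X + T0`.
-/

open MeasureTheory ProbabilityTheory

/-- Error of the best linear estimate of a signal of power `σ2` observed through additive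
uncorrelated noise of power `t`. -/
noncomputable def linearMMSE (σ2 t : ℝ) : ℝ := σ2 * t / (σ2 + t)

lemma linearMMSE_mul_div_sub {σ2 D : ℝ} (hσ2 : σ2 ≠ 0) (hD : D ≠ σ2) :
    linearMMSE σ2 (D * σ2 / (σ2 - D)) = D := by
  have hσD : σ2 - D ≠ 0 := sub_ne_zero.mpr hD.symm
  have hsum : σ2 + D * σ2 / (σ2 - D) = σ2 ^ 2 / (σ2 - D) := by
    field_simp
    ring
  rw [linearMMSE, hsum]
  field_simp

-- `D * σ2 / (σ2 - D) = σ2 ^ 2 / (σ2 - D) - σ2`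
lemma strictMonoOn_mul_div_sub {σ2 : ℝ} (hσ2 : σ2 ≠ 0) :
    StrictMonoOn (fun D => D * σ2 / (σ2 - D)) (Set.Iio σ2) := by
  intro a ha b hb hab
  have ha' : 0 < σ2 - a := sub_pos.mpr ha
  have hb' : 0 < σ2 - b := sub_pos.mpr hb
  simp only
  rw [div_lt_div_iff₀ ha' hb']
  nlinarith [mul_lt_mul_of_pos_left hab (sq_pos_of_ne_zero hσ2)]

section SecondMoments

variable {Ω : Type*} [MeasurableSpace Ω] {μ : Measure Ω}

lemma integral_mul_eq_zero_of_indepFun_s13 {f g : Ω → ℝ} (hfg : IndepFun f g μ)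
    (hf : AEStronglyMeasurable f μ) (hg : AEStronglyMeasurable g μ) (hf0 : ∫ ω, f ω ∂μ = 0) :
    ∫ ω, f ω * g ω ∂μ = 0 := by
  rw [hfg.integral_fun_mul_eq_mul_integral hf hg, hf0, zero_mul]

lemma integral_mul_add_mul_sq {f g : Ω → ℝ} (hf : MemLp f 2 μ) (hg : MemLp g 2 μ) (a b : ℝ) :
    ∫ ω, (a * f ω + b * g ω) ^ 2 ∂μ =
      a ^ 2 * ∫ ω, f ω ^ 2 ∂μ + 2 * a * b * ∫ ω, f ω * g ω ∂μ + b ^ 2 * ∫ ω, g ω ^ 2 ∂μ := by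
  have hf2 : Integrable (fun ω => a ^ 2 * f ω ^ 2) μ := hf.integrable_sq.const_mul _
  have hg2 : Integrable (fun ω => b ^ 2 * g ω ^ 2) μ := hg.integrable_sq.const_mul _
  have hfg : Integrable (fun ω => 2 * a * b * (f ω * g ω)) μ :=
    (hf.integrable_mul hg).const_mul _
  calc ∫ ω, (a * f ω + b * g ω) ^ 2 ∂μ
      = ∫ ω, a ^ 2 * f ω ^ 2 + 2 * a * b * (f ω * g ω) + b ^ 2 * g ω ^ 2 ∂μ := by
        congr with ω; ring
    _ = _ := by
        rw [integral_add (hf2.fun_add hfg) hg2, integral_add hf2 hfg, integral_const_mul,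
          integral_const_mul, integral_const_mul]

lemma integral_sq_sub_linearEstimate {X N : Ω → ℝ} (hX : MemLp X 2 μ) (hN : MemLp N 2 μ)
    (hXN : ∫ ω, X ω * N ω ∂μ = 0) {σ2 t : ℝ} (hσ2 : ∫ ω, X ω ^ 2 ∂μ = σ2)
    (ht : ∫ ω, N ω ^ 2 ∂μ = t) :
    ∫ ω, (X ω - σ2 / (σ2 + t) * (X ω + N ω)) ^ 2 ∂μ = linearMMSE σ2 t := by
  have hσ2_nonneg : 0 ≤ σ2 := hσ2 ▸ integral_nonneg fun ω => sq_nonneg (X ω)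
  have ht_nonneg : 0 ≤ t := ht ▸ integral_nonneg fun ω => sq_nonneg (N ω)
  set α := σ2 / (σ2 + t)
  have herror : ∫ ω, (X ω - α * (X ω + N ω)) ^ 2 ∂μ = (1 - α) ^ 2 * σ2 + α ^ 2 * t := by
    simp_rw [show ∀ ω, X ω - α * (X ω + N ω) = (1 - α) * X ω + (-α) * N ω from
      fun ω => by ring]
    rw [integral_mul_add_mul_sq hX hN, hXN, hσ2, ht]
    ring
  rw [herror, linearMMSE]
  rcases (add_nonneg hσ2_nonneg ht_nonneg).eq_or_lt with h | h
  · -- `σ2 = t = 0`, where `α = 0` by `x / 0 = 0`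
    obtain ⟨rfl, rfl⟩ : σ2 = 0 ∧ t = 0 := by constructor <;> linarith
    simp [α]
  · simp only [α]
    field_simp
    ring

lemma integral_sq_sub_linearEstimate_add {X N₀ N₁ : Ω → ℝ} (hX : MemLp X 2 μ)
    (hN₀ : MemLp N₀ 2 μ) (hN₁ : MemLp N₁ 2 μ) (hXN₀ : ∫ ω, X ω * N₀ ω ∂μ = 0)
    (hXN₁ : ∫ ω, X ω * N₁ ω ∂μ = 0) (hN₀N₁ : ∫ ω, N₀ ω * N₁ ω ∂μ = 0) {σ2 t₀ t₁ : ℝ}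
    (hσ2 : ∫ ω, X ω ^ 2 ∂μ = σ2) (ht₀ : ∫ ω, N₀ ω ^ 2 ∂μ = t₀) (ht₁ : ∫ ω, N₁ ω ^ 2 ∂μ = t₁) :
    ∫ ω, (X ω - σ2 / (σ2 + t₀ + t₁) * (X ω + N₀ ω + N₁ ω)) ^ 2 ∂μ =
      linearMMSE σ2 (t₀ + t₁) := by
  have hXN : ∫ ω, X ω * (N₀ ω + N₁ ω) ∂μ = 0 := by
    have hXN₀' : Integrable (fun ω => X ω * N₀ ω) μ := hX.integrable_mul hN₀
    have hXN₁' : Integrable (fun ω => X ω * N₁ ω) μ := hX.integrable_mul hN₁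
    simp_rw [mul_add]
    rw [integral_add hXN₀' hXN₁', hXN₀, hXN₁, add_zero]
  have hN : ∫ ω, (N₀ ω + N₁ ω) ^ 2 ∂μ = t₀ + t₁ := by
    simpa [hN₀N₁, ht₀, ht₁] using integral_mul_add_mul_sq hN₀ hN₁ 1 1
  simp_rw [add_assoc]
  exact integral_sq_sub_linearEstimate hX (hN₀.add hN₁) hXN hσ2 hN

lemma sqrt_mul_add_sqrt_mul_ae_eq_zero {f g : Ω → ℝ} (hf : MemLp f 2 μ) (hg : MemLp g 2 μ)
    {s t : ℝ} (hs : ∫ ω, f ω ^ 2 ∂μ = s) (ht : ∫ ω, g ω ^ 2 ∂μ = t)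
    (hfg : ∫ ω, f ω * g ω ∂μ = -(√s * √t)) :
    (fun ω => √t * f ω + √s * g ω) =ᵐ[μ] 0 := by
  have hs_nonneg : 0 ≤ s := hs ▸ integral_nonneg fun ω => sq_nonneg (f ω)
  have ht_nonneg : 0 ≤ t := ht ▸ integral_nonneg fun ω => sq_nonneg (g ω)
  have hzero : ∫ ω, (√t * f ω + √s * g ω) ^ 2 ∂μ = 0 := by
    rw [integral_mul_add_mul_sq hf hg, hs, ht, hfg]
    linear_combination (t - 2 * √t ^ 2) * Real.sq_sqrt hs_nonneg - s * Real.sq_sqrt ht_nonneg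
  have hsq := (integral_eq_zero_iff_of_nonneg (fun ω => sq_nonneg _)
    ((hf.const_mul _).add (hg.const_mul _)).integrable_sq).mp hzero
  filter_upwards [hsq] with ω hω
  exact pow_eq_zero_iff two_ne_zero |>.mp hω

lemma integral_sq_sub_centralEstimate {X T₀ T₁ T₂ : Ω → ℝ} (hX : MemLp X 2 μ)
    (hT₀ : MemLp T₀ 2 μ) (hT₁ : MemLp T₁ 2 μ) (hT₂ : MemLp T₂ 2 μ)
    (hXT₀ : ∫ ω, X ω * T₀ ω ∂μ = 0) {σ2 s₀ s₁ s₂ : ℝ} (hσ2 : ∫ ω, X ω ^ 2 ∂μ = σ2)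
    (hs₀ : ∫ ω, T₀ ω ^ 2 ∂μ = s₀) (hs₁ : ∫ ω, T₁ ω ^ 2 ∂μ = s₁) (hs₂ : ∫ ω, T₂ ω ^ 2 ∂μ = s₂)
    (hT₁T₂ : ∫ ω, T₁ ω * T₂ ω ∂μ = -(√s₁ * √s₂)) (hr : √s₁ + √s₂ ≠ 0) :
    ∫ ω, (X ω - σ2 * √s₂ / ((√s₁ + √s₂) * (σ2 + s₀)) * (X ω + T₀ ω + T₁ ω)
        - σ2 * √s₁ / ((√s₁ + √s₂) * (σ2 + s₀)) * (X ω + T₀ ω + T₂ ω)) ^ 2 ∂μ =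
      linearMMSE σ2 s₀ := by
  have hweights : σ2 * √s₂ / ((√s₁ + √s₂) * (σ2 + s₀)) + σ2 * √s₁ / ((√s₁ + √s₂) * (σ2 + s₀))
      = σ2 / (σ2 + s₀) := by
    rw [← add_div, ← mul_div_mul_left σ2 (σ2 + s₀) hr]
    ring
  rw [← integral_sq_sub_linearEstimate hX hT₀ hXT₀ hσ2 hs₀]
  refine integral_congr_ae ?_
  filter_upwards [sqrt_mul_add_sqrt_mul_ae_eq_zero hT₁ hT₂ hs₁ hs₂ hT₁T₂] with ω hω
  rw [Pi.zero_apply] at hω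
  congr 1
  linear_combination (-(X ω + T₀ ω)) * hweights - σ2 / ((√s₁ + √s₂) * (σ2 + s₀)) * hω

end SecondMoments

theorem gaussian_reconstruction_distortions_general
    {Ω : Type*} [MeasurableSpace Ω] (μ : Measure Ω)
    (σ2 D1 D2 D3 s0 s1 s2 : ℝ)
    (hσ : 0 < σ2)
    (hD1 : D1 < σ2)
    (hD2 : D2 < σ2)
    (hs0 : s0 = D3 * σ2 / (σ2 - D3))
    (hs1 : s1 = D1 * σ2 / (σ2 - D1) - s0)
    (hs2 : s2 = D2 * σ2 / (σ2 - D2) - s0)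
    (hmax : D3 < max D1 D2)
    (X T0 T1 T2 : Ω → ℝ)
    (hX2 : MemLp X 2 μ) (hT02 : MemLp T0 2 μ) (hT12 : MemLp T1 2 μ) (hT22 : MemLp T2 2 μ)
    (hXmean : ∫ ω, X ω ∂μ = 0) (hT0mean : ∫ ω, T0 ω ∂μ = 0)
    (hXvar : ∫ ω, (X ω) ^ 2 ∂μ = σ2)
    (hT0var : ∫ ω, (T0 ω) ^ 2 ∂μ = s0)
    (hT1var : ∫ ω, (T1 ω) ^ 2 ∂μ = s1)
    (hT2var : ∫ ω, (T2 ω) ^ 2 ∂μ = s2)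
    (hT1T2 : ∫ ω, T1 ω * T2 ω ∂μ = -(Real.sqrt s1 * Real.sqrt s2))
    -- `X`, `T0` and the pair `(T1, T2)` are mutually independent
    (hIndep1 : IndepFun X T0 μ)
    (hIndep2 : IndepFun (fun ω => (X ω, T0 ω)) (fun ω => (T1 ω, T2 ω)) μ)
    (U1 U2 : Ω → ℝ)
    (hU1 : U1 = fun ω => X ω + T0 ω + T1 ω)
    (hU2 : U2 = fun ω => X ω + T0 ω + T2 ω)
    (α1 α2 β1 β2 : ℝ)
    (hα1 : α1 = σ2 / (σ2 + s0 + s1))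
    (hα2 : α2 = σ2 / (σ2 + s0 + s2))
    (hβ1 : β1 = σ2 * Real.sqrt s2 / ((Real.sqrt s1 + Real.sqrt s2) * (σ2 + s0)))
    (hβ2 : β2 = σ2 * Real.sqrt s1 / ((Real.sqrt s1 + Real.sqrt s2) * (σ2 + s0))) :
    (∫ ω, (X ω - α1 * U1 ω) ^ 2 ∂μ = D1) ∧
    (∫ ω, (X ω - α2 * U2 ω) ^ 2 ∂μ = D2) ∧
    (∫ ω, (X ω - β1 * U1 ω - β2 * U2 ω) ^ 2 ∂μ = D3) := by
  have hXT0 := integral_mul_eq_zero_of_indepFun_s13 hIndep1 hX2.1 hT02.1 hXmean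
  have hXT1 := integral_mul_eq_zero_of_indepFun_s13 (hIndep2.comp measurable_fst measurable_fst)
    hX2.1 hT12.1 hXmean
  have hXT2 := integral_mul_eq_zero_of_indepFun_s13 (hIndep2.comp measurable_fst measurable_snd)
    hX2.1 hT22.1 hXmean
  have hT0T1 := integral_mul_eq_zero_of_indepFun_s13 (hIndep2.comp measurable_snd measurable_fst)
    hT02.1 hT12.1 hT0mean
  have hT0T2 := integral_mul_eq_zero_of_indepFun_s13 (hIndep2.comp measurable_snd measurable_snd)
    hT02.1 hT22.1 hT0mean
  have hmono := strictMonoOn_mul_div_sub hσ.ne'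
  have hD3 : D3 ∈ Set.Iio σ2 := hmax.trans (max_lt hD1 hD2)
  have hr : √s1 + √s2 ≠ 0 := by
    rcases lt_max_iff.mp hmax with h | h
    · have hs1_pos : 0 < s1 := by rw [hs1, hs0, sub_pos]; exact hmono hD3 hD1 h
      positivity
    · have hs2_pos : 0 < s2 := by rw [hs2, hs0, sub_pos]; exact hmono hD3 hD2 h
      positivity
  subst hU1 hU2 hα1 hα2 hβ1 hβ2
  refine ⟨?_, ?_, ?_⟩
  · rw [integral_sq_sub_linearEstimate_add hX2 hT02 hT12 hXT0 hXT1 hT0T1 hXvar hT0var hT1var,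
      show s0 + s1 = D1 * σ2 / (σ2 - D1) by rw [hs1]; ring, linearMMSE_mul_div_sub hσ.ne' hD1.ne]
  · rw [integral_sq_sub_linearEstimate_add hX2 hT02 hT22 hXT0 hXT2 hT0T2 hXvar hT0var hT2var,
      show s0 + s2 = D2 * σ2 / (σ2 - D2) by rw [hs2]; ring, linearMMSE_mul_div_sub hσ.ne' hD2.ne]
  · rw [integral_sq_sub_centralEstimate hX2 hT02 hT12 hT22 hXT0 hXvar hT0var hT1var hT2var
      hT1T2 hr, hs0, linearMMSE_mul_div_sub hσ.ne' hD3.ne]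

/-- The side and central reconstructions of the Gaussian MD test channel achieve
exactly the target distortions: `E[(X − α1·U1)²] = D1`, `E[(X − α2·U2)²] = D2`,
and `E[(X − β1·U1 − β2·U2)²] = D3`. -/
theorem gaussian_reconstruction_distortions
    {Ω : Type*} [MeasurableSpace Ω] (μ : Measure Ω) [IsProbabilityMeasure μ]
    (σ2 D1 D2 D3 s0 s1 s2 : ℝ)
    (hσ : 0 < σ2)
    (hD3pos : 0 < D3) (hD3leD1 : D3 ≤ D1) (hD1 : D1 < σ2)
    (hD3leD2 : D3 ≤ D2) (hD2 : D2 < σ2)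
    (hs0 : s0 = D3 * σ2 / (σ2 - D3))
    (hs1 : s1 = D1 * σ2 / (σ2 - D1) - s0)
    (hs2 : s2 = D2 * σ2 / (σ2 - D2) - s0)
    (hmax : D3 < max D1 D2)
    (X T0 T1 T2 : Ω → ℝ)
    (hX2 : MemLp X 2 μ) (hT02 : MemLp T0 2 μ) (hT12 : MemLp T1 2 μ) (hT22 : MemLp T2 2 μ)
    (hXmean : ∫ ω, X ω ∂μ = 0) (hT0mean : ∫ ω, T0 ω ∂μ = 0)
    (hT1mean : ∫ ω, T1 ω ∂μ = 0) (hT2mean : ∫ ω, T2 ω ∂μ = 0)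
    (hXvar : ∫ ω, (X ω) ^ 2 ∂μ = σ2)
    (hT0var : ∫ ω, (T0 ω) ^ 2 ∂μ = s0)
    (hT1var : ∫ ω, (T1 ω) ^ 2 ∂μ = s1)
    (hT2var : ∫ ω, (T2 ω) ^ 2 ∂μ = s2)
    (hT1T2 : ∫ ω, T1 ω * T2 ω ∂μ = -(Real.sqrt s1 * Real.sqrt s2))
    -- `X`, `T0` and the pair `(T1, T2)` are mutually independent
    (hIndep1 : IndepFun X T0 μ)
    (hIndep2 : IndepFun (fun ω => (X ω, T0 ω)) (fun ω => (T1 ω, T2 ω)) μ)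
    (U1 U2 : Ω → ℝ)
    (hU1 : U1 = fun ω => X ω + T0 ω + T1 ω)
    (hU2 : U2 = fun ω => X ω + T0 ω + T2 ω)
    (α1 α2 β1 β2 : ℝ)
    (hα1 : α1 = σ2 / (σ2 + s0 + s1))
    (hα2 : α2 = σ2 / (σ2 + s0 + s2))
    (hβ1 : β1 = σ2 * Real.sqrt s2 / ((Real.sqrt s1 + Real.sqrt s2) * (σ2 + s0)))
    (hβ2 : β2 = σ2 * Real.sqrt s1 / ((Real.sqrt s1 + Real.sqrt s2) * (σ2 + s0))) :
    (∫ ω, (X ω - α1 * U1 ω) ^ 2 ∂μ = D1) ∧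
    (∫ ω, (X ω - α2 * U2 ω) ^ 2 ∂μ = D2) ∧
    (∫ ω, (X ω - β1 * U1 ω - β2 * U2 ω) ^ 2 ∂μ = D3) :=
  gaussian_reconstruction_distortions_general μ σ2 D1 D2 D3 s0 s1 s2 hσ hD1 hD2 hs0 hs1 hs2 hmax X
    T0 T1 T2 hX2 hT02 hT12 hT22 hXmean hT0mean hXvar hT0var hT1var hT2var hT1T2 hIndep1 hIndep2 U1
    U2 hU1 hU2 α1 α2 β1 β2 hα1 hα2 hβ1 hβ2
end

section
/- Fix P > 0 and define, for triples (D1, D2, D3) with 0 < D3 < D1 < P and 0 < D3 < D2 < P, the function g(D1,D2,D3) = φ(D1,D2,D3)·(√(D1−D3) + √(D2−D3))²/P, where φ(D1,D2,D3) = (P−D3)² / ((P−D3)² − (√((P−D1)(P−D2)) − √((D1−D3)(D2−D3)))²). Then g(D1,D2,D3) → 1 as (D1,D2,D3) → (0,0,0) within the set {(D1,D2,D3) : 0 < D3 < D1 and 0 < D3 < D2}. Equivalently, at high resolution (1/2)·log φ(D1,D2,D3) = (1/2)·log[P/(√(D1−D3) + √(D2−D3))²] + o(1). -/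
set_option maxHeartbeats 1000000


open Filter

/-- High-resolution asymptotics of the excess-sum-rate factor `φ` in Zamir's outer
bound: `φ(D1,D2,D3)·(√(D1−D3)+√(D2−D3))²/P → 1` as `(D1,D2,D3) → (0,0,0)` within
`{0 < D3 < D1, 0 < D3 < D2}`; equivalently, at high resolution
`(1/2)log φ = (1/2)log[P/(√(D1−D3)+√(D2−D3))²] + o(1)`. -/
theorem phi_high_resolution_limit (P : ℝ) (hP : 0 < P) :
    Tendsto
      (fun d : ℝ × ℝ × ℝ =>
        ((P - d.2.2) ^ 2 /
            ((P - d.2.2) ^ 2 -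
              (Real.sqrt ((P - d.1) * (P - d.2.1))
                - Real.sqrt ((d.1 - d.2.2) * (d.2.1 - d.2.2))) ^ 2))
          * (Real.sqrt (d.1 - d.2.2) + Real.sqrt (d.2.1 - d.2.2)) ^ 2 / P)
      (nhdsWithin ((0 : ℝ), (0 : ℝ), (0 : ℝ))
        {d : ℝ × ℝ × ℝ | 0 < d.2.2 ∧ d.2.2 < d.1 ∧ d.2.2 < d.2.1})
      (nhds 1) := by
  set S : Set (ℝ × ℝ × ℝ) := {d : ℝ × ℝ × ℝ | 0 < d.2.2 ∧ d.2.2 < d.1 ∧ d.2.2 < d.2.1}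
    with hSdef
  set L : ℝ × ℝ × ℝ → ℝ := fun d =>
    (P - d.2.2) ^ 2 / (P * max (P - d.2.2) (Real.sqrt ((P - d.1) * (P - d.2.1)))) with hLdef
  set U : ℝ × ℝ × ℝ → ℝ := fun d =>
    (P - d.2.2) ^ 2 / (P * (min (P - d.2.2) (Real.sqrt ((P - d.1) * (P - d.2.1)))
      - ((d.1 - d.2.2) + (d.2.1 - d.2.2)) / 2)) with hUdef
  have hsql : Real.sqrt (P * P) = P := Real.sqrt_mul_self hP.le
  -- limit of the lower bound
  have hLt : Tendsto L (nhdsWithin ((0 : ℝ), (0 : ℝ), (0 : ℝ)) S) (nhds 1) := by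
    have hc : ContinuousAt L ((0 : ℝ), (0 : ℝ), (0 : ℝ)) := by
      apply ContinuousAt.div
      · fun_prop
      · fun_prop
      · simp [hsql]
        positivity
    have hv : L ((0 : ℝ), (0 : ℝ), (0 : ℝ)) = 1 := by
      simp [hLdef, hsql]
      field_simp
    exact (hv ▸ hc.tendsto).mono_left nhdsWithin_le_nhds
  -- limit of the upper bound
  have hUt : Tendsto U (nhdsWithin ((0 : ℝ), (0 : ℝ), (0 : ℝ)) S) (nhds 1) := by
    have hc : ContinuousAt U ((0 : ℝ), (0 : ℝ), (0 : ℝ)) := by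
      apply ContinuousAt.div
      · fun_prop
      · fun_prop
      · simp [hsql]
        positivity
    have hv : U ((0 : ℝ), (0 : ℝ), (0 : ℝ)) = 1 := by
      simp [hUdef, hsql]
      field_simp
    exact (hv ▸ hc.tendsto).mono_left nhdsWithin_le_nhds
  -- eventual smallness of the coordinates
  have hhalf : (0 : ℝ) < P / 2 := by linarith
  have h1 : ∀ᶠ d : ℝ × ℝ × ℝ in nhdsWithin ((0 : ℝ), (0 : ℝ), (0 : ℝ)) S, d.1 < P / 2 :=
    Tendsto.eventually_lt_const hhalf
      ((continuousAt_fst.tendsto).mono_left nhdsWithin_le_nhds)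
  have h2 : ∀ᶠ d : ℝ × ℝ × ℝ in nhdsWithin ((0 : ℝ), (0 : ℝ), (0 : ℝ)) S, d.2.1 < P / 2 :=
    Tendsto.eventually_lt_const hhalf
      (((continuousAt_fst.comp continuousAt_snd).tendsto).mono_left nhdsWithin_le_nhds)
  have h3 : ∀ᶠ d : ℝ × ℝ × ℝ in nhdsWithin ((0 : ℝ), (0 : ℝ), (0 : ℝ)) S, d.2.2 < P / 2 :=
    Tendsto.eventually_lt_const hhalf
      (((continuousAt_snd.comp continuousAt_snd).tendsto).mono_left nhdsWithin_le_nhds)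
  have hmem : ∀ᶠ d : ℝ × ℝ × ℝ in nhdsWithin ((0 : ℝ), (0 : ℝ), (0 : ℝ)) S, d ∈ S :=
    self_mem_nhdsWithin
  -- main pointwise estimates
  have key : ∀ d : ℝ × ℝ × ℝ, d ∈ S → d.1 < P / 2 → d.2.1 < P / 2 → d.2.2 < P / 2 →
      L d ≤ ((P - d.2.2) ^ 2 /
            ((P - d.2.2) ^ 2 -
              (Real.sqrt ((P - d.1) * (P - d.2.1))
                - Real.sqrt ((d.1 - d.2.2) * (d.2.1 - d.2.2))) ^ 2))
          * (Real.sqrt (d.1 - d.2.2) + Real.sqrt (d.2.1 - d.2.2)) ^ 2 / P ∧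
      ((P - d.2.2) ^ 2 /
            ((P - d.2.2) ^ 2 -
              (Real.sqrt ((P - d.1) * (P - d.2.1))
                - Real.sqrt ((d.1 - d.2.2) * (d.2.1 - d.2.2))) ^ 2))
          * (Real.sqrt (d.1 - d.2.2) + Real.sqrt (d.2.1 - d.2.2)) ^ 2 / P ≤ U d := by
    rintro ⟨D1, D2, D3⟩ ⟨hD3, hD31, hD32⟩ h1 h2 h3
    simp only [hLdef, hUdef]
    dsimp only at *
    set a : ℝ := D1 - D3 with hadef
    set b : ℝ := D2 - D3 with hbdef
    set u : ℝ := P - D3 with hudef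
    have ha : 0 < a := by rw [hadef]; linarith
    have hb : 0 < b := by rw [hbdef]; linarith
    have hu : P / 2 < u := by rw [hudef]; linarith
    have hP1 : P / 2 < P - D1 := by linarith
    have hP2 : P / 2 < P - D2 := by linarith
    set sa : ℝ := Real.sqrt a with hsadef
    set sb : ℝ := Real.sqrt b with hsbdef
    set Q : ℝ := Real.sqrt ((P - D1) * (P - D2)) with hQdef
    have hsa0 : 0 ≤ sa := Real.sqrt_nonneg _
    have hsb0 : 0 ≤ sb := Real.sqrt_nonneg _
    have hQ0 : 0 ≤ Q := Real.sqrt_nonneg _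
    have hsa : sa ^ 2 = a := Real.sq_sqrt ha.le
    have hsb : sb ^ 2 = b := Real.sq_sqrt hb.le
    have hQsq : Q ^ 2 = (P - D1) * (P - D2) := Real.sq_sqrt (by nlinarith)
    have hQge : P / 2 ≤ Q := by
      rw [hQdef, Real.le_sqrt hhalf.le (by nlinarith)]
      nlinarith
    have hr : Real.sqrt (a * b) = sa * sb := Real.sqrt_mul ha.le b
    have haP : a < P / 2 := by rw [hadef]; linarith
    have hbP : b < P / 2 := by rw [hbdef]; linarith
    set m : ℝ := min u Q with hmdef
    set M : ℝ := max u Q with hMdef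
    have hmu : m ≤ u := min_le_left _ _
    have hmQ : m ≤ Q := min_le_right _ _
    have huM : u ≤ M := le_max_left _ _
    have hQM : Q ≤ M := le_max_right _ _
    have hm : P / 2 ≤ m := le_min hu.le hQge
    have hMpos : 0 < M := lt_of_lt_of_le (lt_of_lt_of_le hhalf hm) (le_trans hmu huM)
    clear_value a b u sa sb Q m M
    -- key identity
    have haux : u ^ 2 - (P - D1) * (P - D2) = (a + b) * u - a * b := by
      rw [hadef, hbdef, hudef]; ring
    have haux2 : (sa * sb) ^ 2 = a * b := by rw [mul_pow, hsa, hsb]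
    have hE : u ^ 2 - (Q - sa * sb) ^ 2
        = (a + b) * u - 2 * (a * b) + 2 * Q * (sa * sb) := by
      linear_combination haux - hQsq - haux2
    have hspos : 0 < (sa + sb) ^ 2 := by
      have h0 : 0 < sa := by rw [hsadef]; exact Real.sqrt_pos.2 ha
      positivity
    have hssq : (sa + sb) ^ 2 = a + b + 2 * (sa * sb) := by
      have hx : (sa + sb) ^ 2 = sa ^ 2 + sb ^ 2 + 2 * (sa * sb) := by ring
      rw [hx, hsa, hsb]
    have hmab : 0 < m - (a + b) / 2 := by linarith
    have t1 : 0 ≤ (a + b) * (M - u) := mul_nonneg (by linarith) (by linarith)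
    have t2 : 0 ≤ 2 * (sa * sb) * (M - Q) :=
      mul_nonneg (by positivity) (by linarith)
    have t3 : 0 ≤ (a + b) * (u - m) := mul_nonneg (by linarith) (by linarith)
    have t4 : 0 ≤ 2 * (sa * sb) * (Q - m) :=
      mul_nonneg (by positivity) (by linarith)
    have t5 : 0 ≤ (sa * sb) * (a + b) :=
      mul_nonneg (mul_nonneg hsa0 hsb0) (by linarith)
    have hEge : (sa + sb) ^ 2 * (m - (a + b) / 2)
        ≤ (a + b) * u - 2 * (a * b) + 2 * Q * (sa * sb) := by
      rw [hssq]
      linarith [t3, t4, t5, sq_nonneg (a - b)]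
    have hEle : (a + b) * u - 2 * (a * b) + 2 * Q * (sa * sb)
        ≤ (sa + sb) ^ 2 * M := by
      rw [hssq]
      linarith [t1, t2, mul_nonneg ha.le hb.le]
    have hEpos : 0 < (a + b) * u - 2 * (a * b) + 2 * Q * (sa * sb) :=
      lt_of_lt_of_le (by positivity) hEge
    have hupos : 0 < u := lt_trans hhalf hu
    rw [hr, hE]
    constructor
    · -- lower bound
      rw [div_mul_eq_mul_div, div_div]
      rw [div_le_div_iff₀ (by positivity) (mul_pos hEpos hP)]
      linarith [mul_le_mul_of_nonneg_left hEle
        (by positivity : (0:ℝ) ≤ u ^ 2 * P)]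
    · -- upper bound
      rw [div_mul_eq_mul_div, div_div]
      rw [div_le_div_iff₀ (mul_pos hEpos hP) (by positivity)]
      linarith [mul_le_mul_of_nonneg_left hEge
        (by positivity : (0:ℝ) ≤ u ^ 2 * P)]
  have hlow : ∀ᶠ d : ℝ × ℝ × ℝ in nhdsWithin ((0 : ℝ), (0 : ℝ), (0 : ℝ)) S,
      L d ≤ ((P - d.2.2) ^ 2 /
            ((P - d.2.2) ^ 2 -
              (Real.sqrt ((P - d.1) * (P - d.2.1))
                - Real.sqrt ((d.1 - d.2.2) * (d.2.1 - d.2.2))) ^ 2))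
          * (Real.sqrt (d.1 - d.2.2) + Real.sqrt (d.2.1 - d.2.2)) ^ 2 / P := by
    filter_upwards [hmem, h1, h2, h3] with d hd hd1 hd2 hd3
    exact (key d hd hd1 hd2 hd3).1
  have hupp : ∀ᶠ d : ℝ × ℝ × ℝ in nhdsWithin ((0 : ℝ), (0 : ℝ), (0 : ℝ)) S,
      ((P - d.2.2) ^ 2 /
            ((P - d.2.2) ^ 2 -
              (Real.sqrt ((P - d.1) * (P - d.2.1))
                - Real.sqrt ((d.1 - d.2.2) * (d.2.1 - d.2.2))) ^ 2))
          * (Real.sqrt (d.1 - d.2.2) + Real.sqrt (d.2.1 - d.2.2)) ^ 2 / P ≤ U d := by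
    filter_upwards [hmem, h1, h2, h3] with d hd hd1 hd2 hd3
    exact (key d hd hd1 hd2 hd3).2
  exact tendsto_of_tendsto_of_tendsto_of_le_of_le' hLt hUt hlow hupp
end

section
/- Let σ² > 0, and let D1, D2, D3 satisfy 0 < D3 ≤ D1 < σ², 0 < D3 ≤ D2 < σ², and D3 < D1 + D2 − σ². Let R1, R2 ≥ 0 satisfy σ²·2^{−2R1} ≤ D1, σ²·2^{−2R2} ≤ D2, and σ²·2^{−2(R1+R2)} ≤ D3. Then there exist D*1 and D*2 with D3 ≤ D*1 ≤ D1, D3 ≤ D*2 ≤ D2, D*1 + D*2 = σ² + D3, σ²·2^{−2R1} ≤ D*1, and σ²·2^{−2R2} ≤ D*2. (Hence any point of the Gaussian MD region with D3 < D1 + D2 − σ² is dominated by a point on the boundary D3 = D*1 + D*2 − σ².) -/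
/-- In the degenerate regime `D3 < D1 + D2 − σ²` of the Gaussian MD region, any
achievable point is dominated by a point with side distortions `D1*, D2*` on the
boundary `D3 = D1* + D2* − σ²`. -/
theorem gaussian_degenerate_case_dominated
    (σ2 D1 D2 D3 R1 R2 : ℝ)
    (hσ : 0 < σ2)
    (hD3pos : 0 < D3) (hD3leD1 : D3 ≤ D1) (hD1 : D1 < σ2)
    (hD3leD2 : D3 ≤ D2) (hD2 : D2 < σ2)
    (hdeg : D3 < D1 + D2 - σ2)
    (hR1 : 0 ≤ R1) (hR2 : 0 ≤ R2)
    (hrate1 : σ2 * 2 ^ (-(2 * R1)) ≤ D1)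
    (hrate2 : σ2 * 2 ^ (-(2 * R2)) ≤ D2)
    (hrate3 : σ2 * 2 ^ (-(2 * (R1 + R2))) ≤ D3) :
    ∃ D1s D2s : ℝ,
      D3 ≤ D1s ∧ D1s ≤ D1 ∧ D3 ≤ D2s ∧ D2s ≤ D2 ∧
      D3 = D1s + D2s - σ2 ∧
      σ2 * 2 ^ (-(2 * R1)) ≤ D1s ∧ σ2 * 2 ^ (-(2 * R2)) ≤ D2s := by
  set a : ℝ := 2 ^ (-(2 * R1)) with ha_def
  set b : ℝ := 2 ^ (-(2 * R2)) with hb_def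
  have ha1 : a ≤ 1 := Real.rpow_le_one_of_one_le_of_nonpos (by norm_num) (by linarith)
  have hb1 : b ≤ 1 := Real.rpow_le_one_of_one_le_of_nonpos (by norm_num) (by linarith)
  have ha0 : 0 < a := Real.rpow_pos_of_pos (by norm_num) _
  have hb0 : 0 < b := Real.rpow_pos_of_pos (by norm_num) _
  have hab : a * b = 2 ^ (-(2 * (R1 + R2))) := by
    rw [ha_def, hb_def, ← Real.rpow_add (by norm_num)]
    ring_nf
  have hab3 : σ2 * (a * b) ≤ D3 := by rw [hab]; exact hrate3
  have key : σ2 * a + σ2 * b ≤ σ2 + σ2 * (a * b) := by nlinarith [mul_nonneg (sub_nonneg.2 ha1) (sub_nonneg.2 hb1)]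
  refine ⟨max (max D3 (σ2 * a)) (σ2 + D3 - D2), σ2 + D3 - max (max D3 (σ2 * a)) (σ2 + D3 - D2), ?_, ?_, ?_, ?_, by ring, ?_, ?_⟩
  · exact le_max_of_le_left (le_max_left _ _)
  · exact max_le (max_le hD3leD1 hrate1) (by linarith)
  · have : max (max D3 (σ2 * a)) (σ2 + D3 - D2) ≤ σ2 :=
      max_le (max_le (by linarith) (by nlinarith)) (by linarith)
    linarith
  · have : σ2 + D3 - D2 ≤ max (max D3 (σ2 * a)) (σ2 + D3 - D2) := le_max_right _ _
    linarith
  · exact le_max_of_le_left (le_max_right _ _)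
  · rcases max_cases (max D3 (σ2 * a)) (σ2 + D3 - D2) with ⟨h, _⟩ | ⟨h, _⟩
    · rw [h]
      rcases max_cases D3 (σ2 * a) with ⟨h2, _⟩ | ⟨h2, _⟩ <;> rw [h2] <;> nlinarith
    · rw [h]; linarith
end

section
/- Let σ² > 0, 0 < D3 < σ², and γ ∈ [0, 1]. Define D1 = γ·D3 + (1−γ)·σ², D2 = (1−γ)·D3 + γ·σ², R1 = (γ/2)·log₂(σ²/D3), and R2 = ((1−γ)/2)·log₂(σ²/D3). Then: (i) D3 = D1 + D2 − σ²; (ii) R1 + R2 = (1/2)·log₂(σ²/D3); and (iii) R1 ≥ (1/2)·log₂(σ²/D1) and R2 ≥ (1/2)·log₂(σ²/D2), i.e. σ²·2^{−2R1} ≤ D1 and σ²·2^{−2R2} ≤ D2. Hence the timesharing scheme achieves every point on the dominant face of the Gaussian rate region in the no-excess-sum-rate case D3 = D1 + D2 − σ². -/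
lemma timesharing_aux (σ2 D3 w : ℝ)
    (hσ : 0 < σ2) (hD3pos : 0 < D3) (hD3 : D3 < σ2)
    (hw0 : 0 ≤ w) (hw1 : w ≤ 1) :
    σ2 * 2 ^ (-(2 * (w / 2 * Real.logb 2 (σ2 / D3)))) ≤ w * D3 + (1 - w) * σ2 ∧
    (1 / 2) * Real.logb 2 (σ2 / (w * D3 + (1 - w) * σ2)) ≤ w / 2 * Real.logb 2 (σ2 / D3) := by
  have hDpos : 0 < w * D3 + (1 - w) * σ2 := by nlinarith
  have hx : (0:ℝ) < σ2 / D3 := div_pos hσ hD3pos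
  have hpow : (2:ℝ) ^ (-(2 * (w / 2 * Real.logb 2 (σ2 / D3)))) = (σ2 / D3) ^ (-w) := by
    have : (-(2 * (w / 2 * Real.logb 2 (σ2 / D3)))) = Real.logb 2 (σ2 / D3) * (-w) := by ring
    rw [this, Real.rpow_mul (by norm_num : (0:ℝ) ≤ 2),
      Real.rpow_logb (by norm_num) (by norm_num) hx]
  have hval : σ2 * (σ2 / D3) ^ (-w) = D3 ^ w * σ2 ^ (1 - w) := by
    have hne1 := (Real.rpow_pos_of_pos hσ w).ne'
    have hne2 := (Real.rpow_pos_of_pos hD3pos w).ne'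
    rw [Real.rpow_neg hx.le, Real.div_rpow hσ.le hD3pos.le, Real.rpow_sub hσ, Real.rpow_one]
    field_simp
  have hgm : D3 ^ w * σ2 ^ (1 - w) ≤ w * D3 + (1 - w) * σ2 :=
    Real.geom_mean_le_arith_mean2_weighted hw0 (by linarith) hD3pos.le hσ.le (by ring)
  have h1 : σ2 * 2 ^ (-(2 * (w / 2 * Real.logb 2 (σ2 / D3)))) ≤ w * D3 + (1 - w) * σ2 := by
    rw [hpow, hval]; exact hgm
  refine ⟨h1, ?_⟩
  have h2 : σ2 / (w * D3 + (1 - w) * σ2) ≤ (2:ℝ) ^ (2 * (w / 2 * Real.logb 2 (σ2 / D3))) := by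
    rw [div_le_iff₀ hDpos, mul_comm]
    have hp : (0:ℝ) < (2:ℝ) ^ (2 * (w / 2 * Real.logb 2 (σ2 / D3))) := Real.rpow_pos_of_pos (by norm_num) _
    calc σ2 = (2:ℝ) ^ (2 * (w / 2 * Real.logb 2 (σ2 / D3))) *
          (σ2 * 2 ^ (-(2 * (w / 2 * Real.logb 2 (σ2 / D3))))) := by
          rw [← mul_assoc, mul_comm ((2:ℝ) ^ (2 * (w / 2 * Real.logb 2 (σ2 / D3)))) σ2,
            mul_assoc, ← Real.rpow_add (by norm_num : (0:ℝ) < 2)]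
          simp
      _ ≤ (2:ℝ) ^ (2 * (w / 2 * Real.logb 2 (σ2 / D3))) * (w * D3 + (1 - w) * σ2) :=
          mul_le_mul_of_nonneg_left h1 hp.le
      _ = (w * D3 + (1 - w) * σ2) * (2:ℝ) ^ (2 * (w / 2 * Real.logb 2 (σ2 / D3))) :=
          mul_comm _ _
  have := (Real.logb_le_iff_le_rpow (by norm_num : (1:ℝ) < 2) (div_pos hσ hDpos)).2 h2
  linarith

/-- Timesharing achieves every point on the dominant face of the Gaussian rate region
in the no-excess-sum-rate case: with `D1 = γ·D3 + (1−γ)·σ²`, `D2 = (1−γ)·D3 + γ·σ²`,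
`R1 = (γ/2)·log₂(σ²/D3)`, `R2 = ((1−γ)/2)·log₂(σ²/D3)`, one has
`D3 = D1 + D2 − σ²`, `R1 + R2 = (1/2)·log₂(σ²/D3)`, and the side-rate constraints
`R1 ≥ (1/2)·log₂(σ²/D1)` and `R2 ≥ (1/2)·log₂(σ²/D2)`, i.e. `σ²·2^{−2R1} ≤ D1` and
`σ²·2^{−2R2} ≤ D2`. -/
theorem timesharing_achieves_no_excess_sum_rate
    (σ2 D3 γ : ℝ)
    (hσ : 0 < σ2) (hD3pos : 0 < D3) (hD3 : D3 < σ2)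
    (hγ0 : 0 ≤ γ) (hγ1 : γ ≤ 1)
    (D1 D2 R1 R2 : ℝ)
    (hD1 : D1 = γ * D3 + (1 - γ) * σ2)
    (hD2 : D2 = (1 - γ) * D3 + γ * σ2)
    (hR1 : R1 = (γ / 2) * Real.logb 2 (σ2 / D3))
    (hR2 : R2 = ((1 - γ) / 2) * Real.logb 2 (σ2 / D3)) :
    D3 = D1 + D2 - σ2 ∧
    R1 + R2 = (1 / 2) * Real.logb 2 (σ2 / D3) ∧
    (1 / 2) * Real.logb 2 (σ2 / D1) ≤ R1 ∧
    (1 / 2) * Real.logb 2 (σ2 / D2) ≤ R2 ∧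
    σ2 * 2 ^ (-(2 * R1)) ≤ D1 ∧
    σ2 * 2 ^ (-(2 * R2)) ≤ D2 := by
  obtain ⟨h1a, h1b⟩ := timesharing_aux σ2 D3 γ hσ hD3pos hD3 hγ0 hγ1
  obtain ⟨h2a, h2b⟩ := timesharing_aux σ2 D3 (1 - γ) hσ hD3pos hD3 (by linarith) (by linarith)
  have e1 : D2 = (1 - γ) * D3 + (1 - (1 - γ)) * σ2 := by rw [hD2]; ring
  refine ⟨by rw [hD1, hD2]; ring, by rw [hR1, hR2]; ring, ?_, ?_, ?_, ?_⟩
  · rw [hR1, hD1]; linarith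
  · rw [hR2, e1]; exact h2b
  · rw [hR1, hD1]; exact h1a
  · rw [hR2, e1]; exact h2a
end
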